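/- arXiv:2302.11790 — 8 statements merged into one kernel-verified Lean document; each statement's English description precedes it below -/
import Mathlib

section
/- Let m ≥ 2 and let r₁, …, r_m be integers. Define integers b₁ = 1, b₂ = r₁ and b_{i+1} = r_i·b_i − b_{i−1} for 2 ≤ i < m. Then the presented group G = ⟨x₁, …, x_m ∣ x₂x₁^{−r₁}, {x_{i−1}x_{i+1}x_i^{−r_i}}_{1<i<m}, x_{m−1}x_m^{−r_m}⟩ is isomorphic to the cyclic group ℤ/(r_m·b_m − b_{m−1})ℤ. -/
/-- Let `m ≥ 2` and `r₁, …, r_m` be integers. With `b₁ = 1`, `b₂ = r₁`,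
`b_{i+1} = r_i·b_i − b_{i−1}` for `2 ≤ i < m`, the presented group
`⟨x₁, …, x_m ∣ x₂x₁^{−r₁}, {x_{i−1}x_{i+1}x_i^{−r_i}}_{1<i<m}, x_{m−1}x_m^{−r_m}⟩`
is isomorphic to `ℤ/(r_m·b_m − b_{m−1})ℤ`. (The generator `xᵢ` is `FreeGroup.of ⟨i-1, _⟩`.) -/
theorem stmt_0 (m : ℕ) (hm : 2 ≤ m) (r b : ℕ → ℤ)
    (hb1 : b 1 = 1) (hb2 : b 2 = r 1)
    (hbrec : ∀ i, 2 ≤ i → i < m → b (i + 1) = r i * b i - b (i - 1)) :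
    let X : ℕ → FreeGroup (Fin m) := fun i => FreeGroup.of ⟨(i - 1) % m, Nat.mod_lt _ (by omega)⟩
    let rels : Set (FreeGroup (Fin m)) :=
      {X 2 * X 1 ^ (-r 1)} ∪
        {w | ∃ i, 1 < i ∧ i < m ∧ w = X (i - 1) * X (i + 1) * X i ^ (-r i)} ∪
        {X (m - 1) * X m ^ (-r m)}
    Nonempty (PresentedGroup rels ≃* Multiplicative (ZMod (r m * b m - b (m - 1)).natAbs)) := by
  intro X rels
  classical
  set n : ℤ := r m * b m - b (m - 1) with hn
  set N : ℕ := n.natAbs with hN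
  -- images of the generators in the presented group
  have hmem : ∀ w ∈ rels, PresentedGroup.mk rels w = 1 := fun w hw =>
    (QuotientGroup.eq_one_iff _).mpr (Subgroup.subset_normalClosure hw)
  set x : ℕ → PresentedGroup rels := fun i => PresentedGroup.mk rels (X i) with hx
  have hxdef : ∀ i, x i = PresentedGroup.of ⟨(i - 1) % m, Nat.mod_lt _ (by omega)⟩ := fun i => rfl
  -- the three families of relations, in the quotient
  have rel1 : x 2 = x 1 ^ (r 1) := by
    have h := hmem _ (Or.inl (Or.inl rfl))
    rw [map_mul, map_zpow] at h
    have h2 := mul_eq_one_iff_eq_inv.mp h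
    show PresentedGroup.mk rels (X 2) = PresentedGroup.mk rels (X 1) ^ (r 1)
    rw [h2, ← zpow_neg, neg_neg]
  have relmid : ∀ i, 1 < i → i < m → x (i - 1) * x (i + 1) = x i ^ (r i) := by
    intro i h1 h2
    have h := hmem _ (Or.inl (Or.inr ⟨i, h1, h2, rfl⟩))
    rw [map_mul, map_mul, map_zpow] at h
    have h2' := mul_eq_one_iff_eq_inv.mp h
    show PresentedGroup.mk rels (X (i-1)) * PresentedGroup.mk rels (X (i+1))
        = PresentedGroup.mk rels (X i) ^ (r i)
    rw [h2', ← zpow_neg, neg_neg]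
  have relm : x (m - 1) = x m ^ (r m) := by
    have h := hmem _ (Or.inr rfl)
    rw [map_mul, map_zpow] at h
    have h2 := mul_eq_one_iff_eq_inv.mp h
    show PresentedGroup.mk rels (X (m-1)) = PresentedGroup.mk rels (X m) ^ (r m)
    rw [h2, ← zpow_neg, neg_neg]
  -- key: x i = x 1 ^ (b i) for 1 ≤ i ≤ m
  have key : ∀ i, 1 ≤ i → i ≤ m → x i = x 1 ^ (b i) := by
    intro i
    induction i using Nat.strong_induction_on with
    | _ i ih =>
      intro h1 h2
      rcases (show i = 1 ∨ i = 2 ∨ 3 ≤ i by omega) with rfl | rfl | h3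
      · rw [hb1, zpow_one]
      · rw [rel1, hb2]
      · obtain ⟨k, rfl⟩ : ∃ k, i = k + 3 := ⟨i - 3, by omega⟩
        have hkm : k + 2 < m := by omega
        have h1' : x (k + 1) = x 1 ^ (b (k + 1)) := ih (k + 1) (by omega) (by omega) (by omega)
        have h2' : x (k + 2) = x 1 ^ (b (k + 2)) := ih (k + 2) (by omega) (by omega) (by omega)
        have hrel := relmid (k + 2) (by omega) hkm
        have e1 : k + 2 - 1 = k + 1 := by omega
        rw [e1] at hrel
        have hstep : x (k + 3) = (x (k + 1))⁻¹ * x (k + 2) ^ (r (k + 2)) := by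
          rw [← hrel]; group
        have hb3 : b (k + 3) = r (k + 2) * b (k + 2) - b (k + 1) := by
          have := hbrec (k + 2) (by omega) hkm
          simpa using this
        rw [hstep, h1', h2', ← zpow_neg, ← zpow_mul, ← zpow_add, hb3]
        congr 1
        ring
  -- order relation
  have hx1n : x 1 ^ n = 1 := by
    have h1 : x (m - 1) = x 1 ^ (b (m - 1)) := key (m - 1) (by omega) (by omega)
    have h2 : x m = x 1 ^ (b m) := key m (by omega) le_rfl
    have e : x 1 ^ (b (m - 1)) = x 1 ^ (b m * r m) := by
      rw [← h1, relm, h2, ← zpow_mul]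
    have hn' : n = b m * r m - b (m - 1) := by rw [hn]; ring
    rw [hn', zpow_sub, ← e, mul_inv_cancel]
  have hx1N : x 1 ^ ((N : ℤ)) = 1 := by
    rcases Int.natAbs_eq n with h | h
    · rw [hN, ← h]; exact hx1n
    · have hEq : ((N : ℤ)) = -n := by rw [hN]; omega
      rw [hEq, zpow_neg, hx1n, inv_one]
  -- the map φ : PresentedGroup → ZMod N
  set f : Fin m → Multiplicative (ZMod N) :=
    fun j => Multiplicative.ofAdd ((b (j.val + 1) : ZMod N)) with hf
  have hfX : ∀ i, 1 ≤ i → i ≤ m →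
      FreeGroup.lift f (X i) = Multiplicative.ofAdd ((b i : ZMod N)) := by
    intro i hi1 hi2
    show (FreeGroup.lift f) (FreeGroup.of _) = _
    rw [FreeGroup.lift_apply_of, hf]
    have e : (i - 1) % m + 1 = i := by
      rw [Nat.mod_eq_of_lt (show i - 1 < m by omega)]; omega
    show Multiplicative.ofAdd ((b ((i - 1) % m + 1) : ZMod N)) = _
    rw [e]
  have hzpow : ∀ (c : ZMod N) (k : ℤ),
      (Multiplicative.ofAdd c) ^ k = Multiplicative.ofAdd ((k : ZMod N) * c) := by
    intro c k
    rw [← ofAdd_zsmul, zsmul_eq_mul]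
  have hrels : ∀ w ∈ rels, FreeGroup.lift f w = 1 := by
    rintro w ((hw | hw) | hw)
    · rw [Set.mem_singleton_iff] at hw
      subst hw
      rw [map_mul, map_zpow, hfX 2 (by omega) hm, hfX 1 (by omega) (by omega),
        hzpow, ← ofAdd_add, ← ofAdd_zero]
      congr 1
      have h0 : ((b 2 : ℤ) + (-r 1) * b 1) = 0 := by rw [hb1, hb2]; ring
      have hc := congrArg (fun z : ℤ => (z : ZMod N)) h0
      push_cast at hc ⊢
      linear_combination hc
    · obtain ⟨i, hi1, hi2, rfl⟩ := hw
      rw [map_mul, map_mul, map_zpow, hfX (i-1) (by omega) (by omega),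
        hfX (i+1) (by omega) (by omega), hfX i (by omega) (by omega),
        hzpow, ← ofAdd_add, ← ofAdd_add, ← ofAdd_zero]
      congr 1
      have h0 : ((b (i-1) : ℤ) + b (i+1) + (-r i) * b i) = 0 := by
        rw [hbrec i (by omega) hi2]; ring
      have hc := congrArg (fun z : ℤ => (z : ZMod N)) h0
      push_cast at hc ⊢
      linear_combination hc
    · rw [Set.mem_singleton_iff] at hw
      subst hw
      rw [map_mul, map_zpow, hfX (m-1) (by omega) (by omega), hfX m (by omega) le_rfl,
        hzpow, ← ofAdd_add, ← ofAdd_zero]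
      congr 1
      have hdvd : ((N : ℤ)) ∣ ((b (m-1) : ℤ) + (-r m) * b m) := by
        have h0 : ((b (m-1) : ℤ) + (-r m) * b m) = -n := by rw [hn]; ring
        rw [h0, hN]
        exact Int.natAbs_dvd.mpr (dvd_neg.mpr dvd_rfl)
      have h1 := (ZMod.intCast_zmod_eq_zero_iff_dvd _ N).mpr hdvd
      push_cast at h1 ⊢
      linear_combination h1
  set φ : PresentedGroup rels →* Multiplicative (ZMod N) := PresentedGroup.toGroup hrels with hφ
  -- the map ψ : ZMod N → PresentedGroup
  have hfN : (zmultiplesHom (Additive (PresentedGroup rels)) (Additive.ofMul (x 1)))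
      ((N : ℤ)) = 0 := by
    show ((N : ℤ)) • (Additive.ofMul (x 1)) = 0
    rw [← ofMul_zpow, hx1N]
    rfl
  set g : ZMod N →+ Additive (PresentedGroup rels) :=
    ZMod.lift N ⟨zmultiplesHom _ (Additive.ofMul (x 1)), hfN⟩ with hg
  set ψ : Multiplicative (ZMod N) →* PresentedGroup rels :=
    AddMonoidHom.toMultiplicativeLeft g with hψ
  have hψspec : ∀ k : ℤ, ψ (Multiplicative.ofAdd ((k : ZMod N))) = x 1 ^ k := by
    intro k
    show Additive.toMul (g (Multiplicative.toAdd (Multiplicative.ofAdd ((k : ZMod N))))) = _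
    rw [toAdd_ofAdd, hg, ZMod.lift_coe]
    show Additive.toMul (k • Additive.ofMul (x 1)) = x 1 ^ k
    rw [← ofMul_zpow, toMul_ofMul]
  have hof : ∀ j : Fin m, PresentedGroup.of (rels := rels) j = x (j.val + 1) := by
    intro j
    rw [hxdef]
    congr 1
    ext
    simp [Nat.mod_eq_of_lt j.isLt]
  have h1 : ψ.comp φ = MonoidHom.id _ := by
    apply PresentedGroup.ext
    intro j
    rw [MonoidHom.comp_apply, MonoidHom.id_apply, hφ, PresentedGroup.toGroup.of, hf]
    show ψ (Multiplicative.ofAdd (((b (j.val + 1) : ℤ) : ZMod N))) = _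
    rw [hψspec, ← key (j.val + 1) (by omega) (by omega), hof]
  have h2 : φ.comp ψ = MonoidHom.id _ := by
    apply MonoidHom.ext
    intro c
    obtain ⟨k, hk⟩ : ∃ k : ℤ, ((k : ZMod N)) = Multiplicative.toAdd c :=
      ZMod.intCast_surjective _
    have hc : c = Multiplicative.ofAdd ((k : ZMod N)) := by rw [hk]; rfl
    rw [MonoidHom.comp_apply, MonoidHom.id_apply, hc, hψspec, map_zpow]
    have hφx1 : φ (x 1) = Multiplicative.ofAdd ((1 : ZMod N)) := by
      rw [hxdef, hφ, PresentedGroup.toGroup.of, hf]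
      show Multiplicative.ofAdd ((b ((1 - 1) % m + 1) : ZMod N)) = _
      norm_num [hb1]
    rw [hφx1, hzpow]
    congr 1
    ring
  exact ⟨MonoidHom.toMulEquiv φ ψ h1 h2⟩
end

section
/- Let G be a group, m ≥ 2, and let α, x₁, …, x_m ∈ G and integers m₁, …, m_{m−1} satisfy: α commutes with x₁, α·x₂ = x₁^{m₁}, and x_{i−1}·x_{i+1} = x_i^{m_i} for all 1 < i < m. Define integers a₁ = 0, a₂ = −1, a_{i+1} = m_i·a_i − a_{i−1}, and b₁ = 1, b₂ = m₁, b_{i+1} = m_i·b_i − b_{i−1}. Then x_i = α^{a_i}·x₁^{b_i} for all 1 ≤ i ≤ m. -/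
private lemma aux_mul {G : Type*} [Group G] {g h : G} (hC : Commute g h)
    (p q p' q' : ℤ) : (g ^ p * h ^ q) * (g ^ p' * h ^ q') = g ^ (p + p') * h ^ (q + q') := by
  have := (hC.symm.zpow_zpow q p').eq
  rw [zpow_add, zpow_add, mul_assoc, ← mul_assoc (h ^ q), this, mul_assoc, mul_assoc]

private lemma aux_inv {G : Type*} [Group G] {g h : G} (hC : Commute g h)
    (p q : ℤ) : (g ^ p * h ^ q)⁻¹ = g ^ (-p) * h ^ (-q) := by
  rw [mul_inv_rev, ← zpow_neg, ← zpow_neg]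
  exact (hC.zpow_zpow (-p) (-q)).symm.eq

private lemma aux_pow {G : Type*} [Group G] {g h : G} (hC : Commute g h)
    (p q n : ℤ) : (g ^ p * h ^ q) ^ n = g ^ (p * n) * h ^ (q * n) := by
  rw [(hC.zpow_zpow p q).mul_zpow, ← zpow_mul, ← zpow_mul]

/-- In a group `G`, suppose `α` commutes with `x₁`, `α·x₂ = x₁^{c₁}`, and
`x_{i−1}·x_{i+1} = x i^{c_i}` for `1 < i < m` (the exponents `c_i` are the `m_i` of the paper).
With `a₁ = 0`, `a₂ = −1`, `a_{i+1} = c_i·a_i − a_{i−1}` and `b₁ = 1`, `b₂ = c₁`,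
`b_{i+1} = c_i·b_i − b_{i−1}`, we have `x_i = α^{a_i}·x₁^{b_i}` for `1 ≤ i ≤ m`. -/
theorem stmt_2 {G : Type*} [Group G] (m : ℕ) (hm : 2 ≤ m)
    (α : G) (x : ℕ → G) (c a b : ℕ → ℤ)
    (hcomm : α * x 1 = x 1 * α)
    (hx2 : α * x 2 = x 1 ^ c 1)
    (hxrec : ∀ i, 1 < i → i < m → x (i - 1) * x (i + 1) = x i ^ c i)
    (ha1 : a 1 = 0) (ha2 : a 2 = -1)
    (harec : ∀ i, 2 ≤ i → i < m → a (i + 1) = c i * a i - a (i - 1))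
    (hb1 : b 1 = 1) (hb2 : b 2 = c 1)
    (hbrec : ∀ i, 2 ≤ i → i < m → b (i + 1) = c i * b i - b (i - 1)) :
    ∀ i, 1 ≤ i → i ≤ m → x i = α ^ a i * x 1 ^ b i := by
  have hC : Commute α (x 1) := hcomm
  intro i
  induction i using Nat.strong_induction_on with
  | _ i IH =>
    intro hi1 him
    rcases i with _ | _ | _ | k
    · omega
    · simp [ha1, hb1]
    · have : x 2 = α⁻¹ * x 1 ^ c 1 := eq_inv_mul_of_mul_eq hx2
      rw [this, ha2, hb2, zpow_neg_one]
    · have hk2 : 2 ≤ k + 2 := by omega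
      have hkm : k + 2 < m := by omega
      have e := hxrec (k + 2) (by omega) hkm
      have hx1 : x (k + 2 + 1) = (x (k + 2 - 1))⁻¹ * x (k + 2) ^ c (k + 2) :=
        eq_inv_mul_of_mul_eq e
      have IHk := IH (k + 2) (by omega) (by omega) (by omega)
      have IHk1 := IH (k + 2 - 1) (by omega) (by omega) (by omega)
      rw [show k + 2 + 1 = k + 3 from rfl] at hx1
      rw [hx1, IHk, IHk1, aux_inv hC, aux_pow hC, aux_mul hC,
        harec (k + 2) hk2 hkm, hbrec (k + 2) hk2 hkm]
      ring_nf
end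

section
/- In the presented group G = ⟨a, b, c ∣ a³, b³, c³, abc⟩, the subgroup N generated by the two elements a·b⁻¹ and a⁻¹·b is an abelian normal subgroup of G, and the quotient G/N is cyclic of order 3. -/
/-! With `c = (a * b)⁻¹` the group is `⟨a, b ∣ a³, b³, (ab)³⟩`. For `x = a b⁻¹` and `y = a⁻¹ b`
the relations give `x y = a² b a b² = y x`, so `N` is abelian. Conjugation by `a` and by `b`
both send `x ↦ x⁻¹ y = b a b` and `y ↦ x⁻¹`; since `a` and `b` have finite order and generate
the group, `N` is normal. Sending every generator to `1 : ℤ/3` kills `N`; conversely the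
quotient by `N` is generated by the image of `a`, whose cube is trivial, so the quotient map
factors through `ℤ/3` and the kernel is exactly `N`. -/

open Subgroup

section Normalizer

variable {G : Type*} [Group G]

theorem Subgroup.conj_mem_closure_of_forall_mem {s : Set G} {g : G}
    (h : ∀ x ∈ s, g * x * g⁻¹ ∈ closure s) {x : G} (hx : x ∈ closure s) :
    g * x * g⁻¹ ∈ closure s :=
  (closure_le ((closure s).comap (MulAut.conj g).toMonoidHom)).2 h hx

/-- `g⁻¹` is a positive power of `g`, so `g K g⁻¹ ≤ K` also gives `g⁻¹ K g ≤ K`. -/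
theorem Subgroup.mem_normalizer_of_isOfFinOrder {K : Subgroup G} {g : G} (hg : IsOfFinOrder g)
    (h : ∀ x ∈ K, g * x * g⁻¹ ∈ K) : g ∈ normalizer (K : Set G) := by
  have hpow : ∀ n : ℕ, ∀ x ∈ K, g ^ n * x * (g ^ n)⁻¹ ∈ K := by
    intro n
    induction n with
    | zero => simp
    | succ n ih => intro x hx; simpa [pow_succ, mul_assoc] using ih _ (h x hx)
  refine le_normalizer_iff.2 ?_ (mem_zpowers g)
  rintro _ hk x hx
  obtain ⟨n, rfl⟩ := hg.mem_powers_iff_mem_zpowers.2 hk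
  exact hpow n x hx

theorem Subgroup.normal_closure_of_conj_mem {s t : Set G} (ht : closure t = ⊤)
    (ht_fin : ∀ g ∈ t, IsOfFinOrder g) (hconj : ∀ g ∈ t, ∀ x ∈ s, g * x * g⁻¹ ∈ closure s) :
    (closure s).Normal := by
  rw [← normalizer_eq_top_iff, eq_top_iff, ← ht, closure_le]
  exact fun g hg ↦ mem_normalizer_of_isOfFinOrder (ht_fin g hg)
    fun _ ↦ conj_mem_closure_of_forall_mem (hconj g hg)

end Normalizer

section ZModLift

variable {Q : Type*} [Group Q] {n : ℕ}

def zmodMulLift (q : Q) (hq : q ^ n = 1) : Multiplicative (ZMod n) →* Q :=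
  AddMonoidHom.toMultiplicativeLeft <| ZMod.lift n
    ⟨zmultiplesHom _ (Additive.ofMul q), by
      rw [zmultiplesHom_apply, natCast_zsmul, ← ofMul_pow, hq, ofMul_one]⟩

theorem zmodMulLift_ofAdd_one (q : Q) (hq : q ^ n = 1) :
    zmodMulLift q hq (Multiplicative.ofAdd 1) = q := by
  simp only [zmodMulLift, AddMonoidHom.coe_toMultiplicativeLeft, Function.comp_apply, toAdd_ofAdd]
  rw [← Int.cast_one, ZMod.lift_coe]
  simp

end ZModLift

section PowThree

variable {G : Type*} [Group G]

theorem inv_eq_sq_of_pow_three_eq_one {g : G} (h : g ^ 3 = 1) : g⁻¹ = g ^ 2 :=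
  inv_eq_of_mul_eq_one_right (by rw [← pow_succ']; exact h)

theorem isOfFinOrder_of_pow_three_eq_one {g : G} (h : g ^ 3 = 1) : IsOfFinOrder g :=
  isOfFinOrder_iff_pow_eq_one.2 ⟨3, three_pos, h⟩

end PowThree

namespace VonDyck333

variable {G : Type*} [Group G] {a b : G}

theorem commute_mul_inv_inv_mul (ha : a ^ 3 = 1) (hb : b ^ 3 = 1) (hab : (a * b) ^ 3 = 1) :
    Commute (a * b⁻¹) (a⁻¹ * b) :=
  calc a * b⁻¹ * (a⁻¹ * b) = a * (a * b)⁻¹ * b := by group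
    _ = a * a * b * a * b * b := by simp only [inv_eq_sq_of_pow_three_eq_one hab, sq, mul_assoc]
    _ = a⁻¹ * b * (a * b⁻¹) := by
      simp only [inv_eq_sq_of_pow_three_eq_one ha, inv_eq_sq_of_pow_three_eq_one hb, sq, mul_assoc]

theorem inv_mul_inv_mul_eq (ha : a ^ 3 = 1) : (a * b⁻¹)⁻¹ * (a⁻¹ * b) = b * a * b :=
  calc (a * b⁻¹)⁻¹ * (a⁻¹ * b) = b * (a ^ 3)⁻¹ * a * b := by group
    _ = b * a * b := by rw [ha, inv_one, mul_one]

theorem conj_left_mul_inv (ha : a ^ 3 = 1) (hab : (a * b) ^ 3 = 1) :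
    a * (a * b⁻¹) * a⁻¹ = b * a * b :=
  calc a * (a * b⁻¹) * a⁻¹ = a * a * a * (b * a * b) * (a * b * (a * b) * (a * b))⁻¹ := by group
    _ = b * a * b := by rw [← pow_three', ← pow_three', ha, hab, inv_one, one_mul, mul_one]

theorem conj_right_mul_inv (hb : b ^ 3 = 1) : b * (a * b⁻¹) * b⁻¹ = b * a * b :=
  calc b * (a * b⁻¹) * b⁻¹ = b * a * b * (b ^ 3)⁻¹ := by group
    _ = b * a * b := by rw [hb, inv_one, mul_one]

theorem isMulCommutative_closure_mul_inv_inv_mul (ha : a ^ 3 = 1) (hb : b ^ 3 = 1)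
    (hab : (a * b) ^ 3 = 1) : IsMulCommutative (closure {a * b⁻¹, a⁻¹ * b}) := by
  refine Subgroup.isMulCommutative_closure ?_
  simp only [Set.mem_insert_iff, Set.mem_singleton_iff]
  rintro x (rfl | rfl) y (rfl | rfl)
  exacts [rfl, commute_mul_inv_inv_mul ha hb hab, (commute_mul_inv_inv_mul ha hb hab).symm, rfl]

theorem normal_closure_mul_inv_inv_mul (ha : a ^ 3 = 1) (hb : b ^ 3 = 1) (hab : (a * b) ^ 3 = 1)
    (hgen : closure {a, b} = ⊤) : (closure {a * b⁻¹, a⁻¹ * b}).Normal := by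
  have hx : a * b⁻¹ ∈ closure {a * b⁻¹, a⁻¹ * b} := subset_closure (by simp)
  have hy : a⁻¹ * b ∈ closure {a * b⁻¹, a⁻¹ * b} := subset_closure (by simp)
  have hbab : b * a * b ∈ closure {a * b⁻¹, a⁻¹ * b} :=
    inv_mul_inv_mul_eq ha ▸ mul_mem (inv_mem hx) hy
  refine normal_closure_of_conj_mem hgen ?_ ?_
  · simp only [Set.mem_insert_iff, Set.mem_singleton_iff]
    rintro g (rfl | rfl)
    exacts [isOfFinOrder_of_pow_three_eq_one ha, isOfFinOrder_of_pow_three_eq_one hb]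
  · simp only [Set.mem_insert_iff, Set.mem_singleton_iff]
    rintro g (rfl | rfl) x (rfl | rfl)
    · exact conj_left_mul_inv ha hab ▸ hbab
    · exact (by group : g * (g⁻¹ * b) * g⁻¹ = (g * b⁻¹)⁻¹) ▸ inv_mem hx
    · exact conj_right_mul_inv hb ▸ hbab
    · exact (by group : g * (a⁻¹ * g) * g⁻¹ = (a * g⁻¹)⁻¹) ▸ inv_mem hx

theorem ker_eq_closure_mul_inv_inv_mul (ha : a ^ 3 = 1) (hb : b ^ 3 = 1) (hab : (a * b) ^ 3 = 1)
    (hgen : closure {a, b} = ⊤) {φ : G →* Multiplicative (ZMod 3)}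
    (hφa : φ a = Multiplicative.ofAdd 1) (hφb : φ b = Multiplicative.ofAdd 1) :
    φ.ker = closure {a * b⁻¹, a⁻¹ * b} := by
  set N := closure {a * b⁻¹, a⁻¹ * b}
  have := normal_closure_mul_inv_inv_mul ha hb hab hgen
  refine le_antisymm ?_ ((closure_le _).2 ?_)
  · have hq : (a : G ⧸ N) ^ 3 = 1 := by rw [← QuotientGroup.mk_pow, ha, QuotientGroup.mk_one]
    have hfactor : (zmodMulLift _ hq).comp φ = QuotientGroup.mk' N := by
      refine MonoidHom.eq_of_eqOn_dense hgen ?_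
      rintro g (rfl | rfl)
      · simp [hφa, zmodMulLift_ofAdd_one]
      · simpa [hφb, zmodMulLift_ofAdd_one] using QuotientGroup.eq.2 (subset_closure (by simp))
    rw [← QuotientGroup.ker_mk' N, ← hfactor, ← MonoidHom.comap_ker]
    exact φ.ker_le_comap _
  · simp [Set.insert_subset_iff, hφa, hφb]

def relators : Set (FreeGroup (Fin 3)) :=
  {FreeGroup.of 0 ^ 3, FreeGroup.of 1 ^ 3, FreeGroup.of 2 ^ 3,
    FreeGroup.of 0 * FreeGroup.of 1 * FreeGroup.of 2}

local notation "Δ" => PresentedGroup relators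

theorem of_pow_three (i : Fin 3) : (PresentedGroup.of i : Δ) ^ 3 = 1 :=
  PresentedGroup.one_of_mem (by fin_cases i <;> simp [relators])

theorem of_two_eq : (PresentedGroup.of 2 : Δ) = (PresentedGroup.of 0 * PresentedGroup.of 1)⁻¹ :=
  eq_inv_of_mul_eq_one_right (PresentedGroup.one_of_mem (by simp [relators]))

theorem of_zero_mul_of_one_pow_three :
    (PresentedGroup.of 0 * PresentedGroup.of 1 : Δ) ^ 3 = 1 := by
  rw [← inv_inv (_ * _), ← of_two_eq, inv_pow, of_pow_three, inv_one]

theorem closure_of_zero_of_one :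
    closure {PresentedGroup.of 0, PresentedGroup.of 1} = (⊤ : Subgroup Δ) := by
  rw [eq_top_iff, ← PresentedGroup.closure_range_of, closure_le]
  rintro _ ⟨i, rfl⟩
  fin_cases i
  · exact subset_closure (by simp)
  · exact subset_closure (by simp)
  · exact of_two_eq ▸ inv_mem (mul_mem (subset_closure (by simp)) (subset_closure (by simp)))

def toZMod : Δ →* Multiplicative (ZMod 3) :=
  PresentedGroup.toGroup (f := fun _ ↦ Multiplicative.ofAdd 1) <| by
    simp only [relators, Set.mem_insert_iff, Set.mem_singleton_iff]
    rintro r (rfl | rfl | rfl | rfl) <;>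
      simp only [map_pow, map_mul, FreeGroup.lift_apply_of] <;> decide

theorem toZMod_of (i : Fin 3) : toZMod (PresentedGroup.of i) = Multiplicative.ofAdd 1 :=
  PresentedGroup.toGroup.of _

theorem toZMod_surjective : Function.Surjective toZMod := fun m ↦
  ⟨PresentedGroup.of 0 ^ (Multiplicative.toAdd m).val, by
    rw [map_pow, toZMod_of, ← ofAdd_nsmul, nsmul_one, ZMod.natCast_zmod_val, ofAdd_toAdd]⟩

end VonDyck333

/-- In `G = ⟨a, b, c ∣ a³, b³, c³, abc⟩`, the subgroup `N` generated by
`a·b⁻¹` and `a⁻¹·b` is an abelian normal subgroup and `G/N` is cyclic of order `3`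
(expressed by a surjective homomorphism onto `ℤ/3ℤ` with kernel `N`). -/
theorem stmt_3 :
    let rels : Set (FreeGroup (Fin 3)) :=
      {FreeGroup.of 0 ^ 3, FreeGroup.of 1 ^ 3, FreeGroup.of 2 ^ 3,
        FreeGroup.of 0 * FreeGroup.of 1 * FreeGroup.of 2}
    let a : PresentedGroup rels := PresentedGroup.of 0
    let b : PresentedGroup rels := PresentedGroup.of 1
    let N : Subgroup (PresentedGroup rels) := Subgroup.closure {a * b⁻¹, a⁻¹ * b}
    N.Normal ∧ (∀ x ∈ N, ∀ y ∈ N, x * y = y * x) ∧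
      ∃ φ : PresentedGroup rels →* Multiplicative (ZMod 3),
        Function.Surjective φ ∧ φ.ker = N := by
  intro rels a b N
  have ha : a ^ 3 = 1 := VonDyck333.of_pow_three 0
  have hb : b ^ 3 = 1 := VonDyck333.of_pow_three 1
  have hab : (a * b) ^ 3 = 1 := VonDyck333.of_zero_mul_of_one_pow_three
  have hgen : closure {a, b} = ⊤ := VonDyck333.closure_of_zero_of_one
  have := VonDyck333.isMulCommutative_closure_mul_inv_inv_mul ha hb hab
  exact ⟨VonDyck333.normal_closure_mul_inv_inv_mul ha hb hab hgen,
    fun x hx y hy ↦ le_centralizer N hy x hx, VonDyck333.toZMod, VonDyck333.toZMod_surjective,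
    VonDyck333.ker_eq_closure_mul_inv_inv_mul ha hb hab hgen
      (VonDyck333.toZMod_of 0) (VonDyck333.toZMod_of 1)⟩
end

section
/- In the presented group G = ⟨a, b, c ∣ a², b⁴, c⁴, abc⟩, the subgroup N generated by the two elements b·c⁻¹ and b⁻¹·c is an abelian normal subgroup of G, and the quotient G/N is cyclic of order 4. -/
namespace Stmt4Aux

def rels : Set (FreeGroup (Fin 3)) :=
  {FreeGroup.of 0 ^ 2, FreeGroup.of 1 ^ 4, FreeGroup.of 2 ^ 4,
    FreeGroup.of 0 * FreeGroup.of 1 * FreeGroup.of 2}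

abbrev G := PresentedGroup rels

def a : G := PresentedGroup.of 0
def b : G := PresentedGroup.of 1
def c : G := PresentedGroup.of 2

def N : Subgroup G := Subgroup.closure {b * c⁻¹, b⁻¹ * c}

lemma m1 : (FreeGroup.of 0 ^ 2 : FreeGroup (Fin 3)) ∈ rels := Set.mem_insert _ _
lemma m2 : (FreeGroup.of 1 ^ 4 : FreeGroup (Fin 3)) ∈ rels :=
  Set.mem_insert_of_mem _ (Set.mem_insert _ _)
lemma m3 : (FreeGroup.of 2 ^ 4 : FreeGroup (Fin 3)) ∈ rels :=
  Set.mem_insert_of_mem _ (Set.mem_insert_of_mem _ (Set.mem_insert _ _))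
lemma m4 : (FreeGroup.of 0 * FreeGroup.of 1 * FreeGroup.of 2 : FreeGroup (Fin 3)) ∈ rels :=
  Set.mem_insert_of_mem _ (Set.mem_insert_of_mem _
    (Set.mem_insert_of_mem _ (Set.mem_singleton _)))

lemma hrel : ∀ r ∈ rels, PresentedGroup.mk rels r = 1 := fun r hr =>
  (QuotientGroup.eq_one_iff r).mpr (Subgroup.subset_normalClosure hr)

lemma ha2 : a * a = 1 := by
  have := hrel _ m1; rwa [pow_two, map_mul] at this

lemma hb4 : b ^ 4 = 1 := by
  have := hrel _ m2; rwa [map_pow] at this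

lemma hc4 : c ^ 4 = 1 := by
  have := hrel _ m3; rwa [map_pow] at this

lemma habc : a * b * c = 1 := by
  have := hrel _ m4; rwa [map_mul, map_mul] at this

lemma hb1 : b * (b * (b * b)) = 1 := by
  rw [← hb4]; simp [pow_succ, mul_assoc]

lemma hc1 : c * (c * (c * c)) = 1 := by
  rw [← hc4]; simp [pow_succ, mul_assoc]

lemma haeq0 : a = (b * c)⁻¹ :=
  eq_inv_of_mul_eq_one_left (by rw [← mul_assoc]; exact habc)

lemma hK : (b * c) * (b * c) = 1 := by
  have := ha2
  rw [haeq0, ← mul_inv_rev, inv_eq_one] at this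
  exact this

lemma hbcinv : (b * c)⁻¹ = b * c := inv_eq_of_mul_eq_one_left hK

lemma haeq : a = b * c := by rw [haeq0, hbcinv]

lemma hK' : (c * b) * (c * b) = 1 := by
  calc (c * b) * (c * b) = b⁻¹ * ((b * c) * (b * c)) * b := by group
    _ = 1 := by rw [hK]; group

lemma hcbinv : (c * b)⁻¹ = c * b := inv_eq_of_mul_eq_one_left hK'

lemma ainv : a⁻¹ = a := inv_eq_of_mul_eq_one_left ha2

lemma hbinv : b⁻¹ = b * (b * b) := inv_eq_of_mul_eq_one_right hb1
lemma hcinv : c⁻¹ = c * (c * c) := inv_eq_of_mul_eq_one_right hc1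

lemma hb3 : b⁻¹ * (b⁻¹ * b⁻¹) = b := by
  rw [hbinv]
  calc (b*(b*b))*((b*(b*b))*(b*(b*b))) = b*(b*(b*(b*b)))*(b*(b*(b*b))) := by group
    _ = b*1*1 := by rw [hb1]
    _ = b := by group

lemma hc3 : c⁻¹ * (c⁻¹ * c⁻¹) = c := by
  rw [hcinv]
  calc (c*(c*c))*((c*(c*c))*(c*(c*c))) = c*(c*(c*(c*c)))*(c*(c*(c*c))) := by group
    _ = c*1*1 := by rw [hc1]
    _ = c := by group

lemma hbcb : b * c * b = c⁻¹ :=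
  eq_inv_of_mul_eq_one_left (by rw [← hK]; group)

lemma hcbc : c * b * c = b⁻¹ :=
  eq_inv_of_mul_eq_one_left (by rw [← hK']; group)

lemma hcb : c * b = b⁻¹ * c⁻¹ := by
  rw [← mul_inv_rev, hcbinv]

lemma hbc : b * c = c⁻¹ * b⁻¹ := by
  rw [← mul_inv_rev, hbcinv]

def x₀ : G := b * c⁻¹
def y₀ : G := b⁻¹ * c

lemma genx : x₀ ∈ N := Subgroup.subset_closure (Set.mem_insert _ _)
lemma geny : y₀ ∈ N :=
  Subgroup.subset_closure (Set.mem_insert_of_mem _ (Set.mem_singleton _))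

lemma e1 : b * x₀ * b⁻¹ = y₀ := by
  show b * (b * c⁻¹) * b⁻¹ = b⁻¹ * c
  calc b * (b * c⁻¹) * b⁻¹ = b * b * (b * c)⁻¹ := by group
    _ = b * b * (b * c) := by rw [hbcinv]
    _ = b⁻¹ * c := by rw [hbinv]; group

lemma e2 : b * y₀ * b⁻¹ = x₀⁻¹ := by
  show b * (b⁻¹ * c) * b⁻¹ = (b * c⁻¹)⁻¹
  group

lemma e3 : b⁻¹ * x₀ * b = y₀⁻¹ := by
  show b⁻¹ * (b * c⁻¹) * b = (b⁻¹ * c)⁻¹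
  group

lemma e4 : b⁻¹ * y₀ * b = x₀ := by
  show b⁻¹ * (b⁻¹ * c) * b = b * c⁻¹
  rw [← hbcb, hbinv]
  calc b*(b*b)*(b*(b*b)*c)*b = b*b*(b*(b*(b*b)))*(c*b) := by group
    _ = b*b*1*(c*b) := by rw [hb1]
    _ = b*(b*c*b) := by group

lemma e5 : c * x₀ * c⁻¹ = y₀ := by
  show c * (b * c⁻¹) * c⁻¹ = b⁻¹ * c
  calc c * (b * c⁻¹) * c⁻¹ = (c * b) * (c⁻¹ * (c⁻¹ * c⁻¹)) * c := by group
    _ = (b⁻¹ * c⁻¹) * (c⁻¹ * (c⁻¹ * c⁻¹)) * c := by rw [hcb]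
    _ = b⁻¹ * c⁻¹ * c * (c⁻¹ * (c⁻¹ * c⁻¹)) := by group
    _ = b⁻¹ * c⁻¹ * c * c := by rw [hc3]
    _ = b⁻¹ * c := by group

lemma e6 : c * y₀ * c⁻¹ = x₀⁻¹ := by
  show c * (b⁻¹ * c) * c⁻¹ = (b * c⁻¹)⁻¹
  group

lemma e7 : c⁻¹ * x₀ * c = y₀⁻¹ := by
  show c⁻¹ * (b * c⁻¹) * c = (b⁻¹ * c)⁻¹
  group

lemma e8 : c⁻¹ * y₀ * c = x₀ := by
  show c⁻¹ * (b⁻¹ * c) * c = b * c⁻¹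
  calc c⁻¹ * (b⁻¹ * c) * c = (b * c)⁻¹ * (c * c) := by group
    _ = (b * c) * (c * c) := by rw [hbcinv]
    _ = b * (c * (c * c)) := by group
    _ = b * c⁻¹ := by rw [← hcinv]

lemma e9 : a * x₀ * a⁻¹ = x₀⁻¹ := by
  rw [haeq]
  show (b * c) * (b * c⁻¹) * (b * c)⁻¹ = (b * c⁻¹)⁻¹
  calc (b*c)*(b*c⁻¹)*(b*c)⁻¹ = b*(c*b)*(c⁻¹*(c⁻¹*c⁻¹))*(c*b⁻¹) := by group
    _ = b*(b⁻¹*c⁻¹)*(c⁻¹*(c⁻¹*c⁻¹))*(c*b⁻¹) := by rw [hcb]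
    _ = c⁻¹*(c⁻¹*c⁻¹)*b⁻¹ := by group
    _ = c*b⁻¹ := by rw [hc3]
    _ = (b*c⁻¹)⁻¹ := by group

lemma e10 : a * y₀ * a⁻¹ = y₀⁻¹ := by
  rw [haeq]
  show (b * c) * (b⁻¹ * c) * (b * c)⁻¹ = (b⁻¹ * c)⁻¹
  calc (b*c)*(b⁻¹*c)*(b*c)⁻¹ = (b*c*b)*(b⁻¹*(b⁻¹*b⁻¹)) := by group
    _ = c⁻¹*(b⁻¹*(b⁻¹*b⁻¹)) := by rw [hbcb]
    _ = c⁻¹*b := by rw [hb3]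
    _ = (b⁻¹*c)⁻¹ := by group

lemma hcomm : x₀ * y₀ = y₀ * x₀ := by
  have lhs : x₀ * y₀ = b * b * (c * c) := by
    show b * c⁻¹ * (b⁻¹ * c) = b * b * (c * c)
    calc b * c⁻¹ * (b⁻¹ * c) = b * (b * c)⁻¹ * c := by group
      _ = b * (b * c) * c := by rw [hbcinv]
      _ = b * b * (c * c) := by group
  have rhs : y₀ * x₀ = b * b * (c * c) := by
    show b⁻¹ * c * (b * c⁻¹) = b * b * (c * c)
    calc b⁻¹ * c * (b * c⁻¹) = b⁻¹ * (c * b) * c⁻¹ := by group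
      _ = b⁻¹ * (b⁻¹ * c⁻¹) * c⁻¹ := by rw [hcb]
      _ = b⁻¹ * (b⁻¹ * b⁻¹) * (b * ((c⁻¹ * (c⁻¹ * c⁻¹)) * c)) := by group
      _ = b * (b * (c * c)) := by rw [hb3, hc3]
      _ = b * b * (c * c) := by group
  rw [lhs, rhs]

lemma conjN : ∀ g : G, g * x₀ * g⁻¹ ∈ N → g * y₀ * g⁻¹ ∈ N → ∀ n ∈ N, g * n * g⁻¹ ∈ N := by
  intro g h1 h2 n hn
  induction hn using Subgroup.closure_induction with
  | mem z hz =>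
    rcases hz with rfl | hz
    · exact h1
    · rw [Set.mem_singleton_iff] at hz; subst hz; exact h2
  | one => simpa using one_mem N
  | mul u v hu hv hu' hv' =>
    have h : g * (u * v) * g⁻¹ = (g * u * g⁻¹) * (g * v * g⁻¹) := by group
    rw [h]; exact mul_mem hu' hv'
  | inv u hu hu' =>
    have h : g * u⁻¹ * g⁻¹ = (g * u * g⁻¹)⁻¹ := by group
    rw [h]; exact inv_mem hu'

lemma conj_a : ∀ n ∈ N, a * n * a⁻¹ ∈ N :=
  conjN a (e9 ▸ inv_mem genx) (e10 ▸ inv_mem geny)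

lemma conj_b : ∀ n ∈ N, b * n * b⁻¹ ∈ N :=
  conjN b (e1 ▸ geny) (e2 ▸ inv_mem genx)

lemma conj_binv : ∀ n ∈ N, b⁻¹ * n * b ∈ N := by
  have h := conjN b⁻¹ (by rw [inv_inv]; exact e3 ▸ inv_mem geny)
    (by rw [inv_inv]; exact e4 ▸ genx)
  simpa using h

lemma conj_c : ∀ n ∈ N, c * n * c⁻¹ ∈ N :=
  conjN c (e5 ▸ geny) (e6 ▸ inv_mem genx)

lemma conj_cinv : ∀ n ∈ N, c⁻¹ * n * c ∈ N := by
  have h := conjN c⁻¹ (by rw [inv_inv]; exact e7 ▸ inv_mem geny)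
    (by rw [inv_inv]; exact e8 ▸ genx)
  simpa using h

lemma hNnormal : N.Normal := by
  rw [← Subgroup.normalizer_eq_top_iff, eq_top_iff, ← PresentedGroup.closure_range_of rels,
    Subgroup.closure_le]
  rintro _ ⟨i, rfl⟩
  rw [SetLike.mem_coe, Subgroup.mem_normalizer_iff]
  fin_cases i
  · show ∀ h : G, h ∈ N ↔ a * h * a⁻¹ ∈ N
    intro h
    constructor
    · exact fun hh => conj_a h hh
    · intro hh
      rw [ainv] at hh
      have h2 := conj_a _ hh
      rw [ainv] at h2
      have e : a * (a * h * a) * a = h := by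
        calc a * (a * h * a) * a = (a * a) * h * (a * a) := by group
          _ = 1 * h * 1 := by rw [ha2]
          _ = h := by group
      rwa [e] at h2
  · show ∀ h : G, h ∈ N ↔ b * h * b⁻¹ ∈ N
    intro h
    constructor
    · exact fun hh => conj_b h hh
    · intro hh
      have h2 := conj_binv _ hh
      have e : b⁻¹ * (b * h * b⁻¹) * b = h := by group
      rwa [e] at h2
  · show ∀ h : G, h ∈ N ↔ c * h * c⁻¹ ∈ N
    intro h
    constructor
    · exact fun hh => conj_c h hh
    · intro hh
      have h2 := conj_cinv _ hh
      have e : c⁻¹ * (c * h * c⁻¹) * c = h := by group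
      rwa [e] at h2

lemma hNabelian : ∀ x ∈ N, ∀ y ∈ N, x * y = y * x := by
  intro u hu v hv
  induction hu using Subgroup.closure_induction with
  | mem z hz =>
    induction hv using Subgroup.closure_induction with
    | mem w hw =>
      rcases hz with rfl | hz <;> rcases hw with rfl | hw
      · rfl
      · rw [Set.mem_singleton_iff] at hw; subst hw; exact hcomm
      · rw [Set.mem_singleton_iff] at hz; subst hz; exact hcomm.symm
      · rw [Set.mem_singleton_iff] at hz hw; subst hz; subst hw; rfl
    | one => simp
    | mul p q hp hq hp' hq' => rw [← mul_assoc, hp', mul_assoc, hq', ← mul_assoc]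
    | inv p hp hp' => exact (Commute.inv_right hp').eq
  | one => simp
  | mul p q hp hq hp' hq' =>
    exact (Commute.mul_left (hp' : Commute p v) (hq' : Commute q v)).eq
  | inv p hp hp' => exact (Commute.inv_left hp').eq

def f : Fin 3 → Multiplicative (ZMod 4) :=
  ![Multiplicative.ofAdd 2, Multiplicative.ofAdd 1, Multiplicative.ofAdd 1]

lemma hrelf : ∀ r ∈ rels, FreeGroup.lift f r = 1 := by
  intro r hr
  rcases hr with rfl | rfl | rfl | hr
  · rw [map_pow, FreeGroup.lift_apply_of]; decide
  · rw [map_pow, FreeGroup.lift_apply_of]; decide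
  · rw [map_pow, FreeGroup.lift_apply_of]; decide
  · rw [Set.mem_singleton_iff] at hr; subst hr
    rw [map_mul, map_mul, FreeGroup.lift_apply_of, FreeGroup.lift_apply_of, FreeGroup.lift_apply_of]; decide

def φ : G →* Multiplicative (ZMod 4) := PresentedGroup.toGroup hrelf

lemma φa : φ a = Multiplicative.ofAdd 2 := PresentedGroup.toGroup.of hrelf
lemma φb : φ b = Multiplicative.ofAdd 1 := PresentedGroup.toGroup.of hrelf
lemma φc : φ c = Multiplicative.ofAdd 1 := PresentedGroup.toGroup.of hrelf

instance : N.Normal := hNnormal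

def π : G →* G ⧸ N := QuotientGroup.mk' N

lemma πbc : π b = π c := by
  have h : π (b * c⁻¹) = 1 := (QuotientGroup.eq_one_iff _).mpr genx
  rw [map_mul, map_inv] at h
  exact mul_inv_eq_one.mp h

lemma ht : (π b) ^ 4 = 1 := by rw [← map_pow, hb4, map_one]

lemma key : ∀ m : ℕ, (π b) ^ m = (π b) ^ (m % 4) := by
  intro m
  conv_lhs => rw [← Nat.mod_add_div m 4]
  rw [pow_add, pow_mul, ht, one_pow, mul_one]

def ψ : Multiplicative (ZMod 4) →* G ⧸ N where
  toFun := fun z => (π b) ^ (z.toAdd.val)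
  map_one' := by
    show (π b) ^ ((Multiplicative.toAdd (1 : Multiplicative (ZMod 4))).val) = 1
    rw [toAdd_one, ZMod.val_zero, pow_zero]
  map_mul' := by
    intro u v
    show (π b) ^ ((Multiplicative.toAdd (u * v)).val)
      = (π b) ^ (u.toAdd.val) * (π b) ^ (v.toAdd.val)
    rw [toAdd_mul, ZMod.val_add, ← key, pow_add]

lemma hcomp : ψ.comp φ = π := by
  apply PresentedGroup.ext
  intro i
  fin_cases i
  · show ψ (φ a) = π a
    rw [φa]
    show (π b) ^ ((2 : ZMod 4)).val = π a
    have h : ((2 : ZMod 4)).val = 2 := by decide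
    rw [h, haeq, map_mul, ← πbc, pow_two]
  · show ψ (φ b) = π b
    rw [φb]
    show (π b) ^ ((1 : ZMod 4)).val = π b
    have h : ((1 : ZMod 4)).val = 1 := by decide
    rw [h, pow_one]
  · show ψ (φ c) = π c
    rw [φc]
    show (π b) ^ ((1 : ZMod 4)).val = π c
    have h : ((1 : ZMod 4)).val = 1 := by decide
    rw [h, pow_one, ← πbc]

lemma φsurj : Function.Surjective φ := by
  intro z
  refine ⟨b ^ (z.toAdd.val), ?_⟩
  rw [map_pow, φb]
  show Multiplicative.ofAdd (1 : ZMod 4) ^ (z.toAdd.val) = z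
  rw [← ofAdd_nsmul, nsmul_eq_mul, mul_one, ZMod.natCast_rightInverse z.toAdd]
  exact ofAdd_toAdd z

lemma φker : φ.ker = N := by
  ext g
  constructor
  · intro hg
    rw [MonoidHom.mem_ker] at hg
    have h : π g = 1 := by
      rw [← hcomp]
      show ψ (φ g) = 1
      rw [hg, map_one]
    exact (QuotientGroup.eq_one_iff g).mp h
  · intro hg
    rw [MonoidHom.mem_ker]
    have hle : N ≤ φ.ker := by
      apply (Subgroup.closure_le _).mpr
      rintro z (rfl | hz)
      · rw [SetLike.mem_coe, MonoidHom.mem_ker, map_mul, map_inv, φb, φc]; decide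
      · rw [Set.mem_singleton_iff] at hz; subst hz
        rw [SetLike.mem_coe, MonoidHom.mem_ker, map_mul, map_inv, φb, φc]; decide
    exact hle hg

end Stmt4Aux

/-- In `G = ⟨a, b, c ∣ a², b⁴, c⁴, abc⟩`, the subgroup `N` generated by
`b·c⁻¹` and `b⁻¹·c` is an abelian normal subgroup and `G/N` is cyclic of order `4`
(expressed by a surjective homomorphism onto `ℤ/4ℤ` with kernel `N`). -/
theorem stmt_4 :
    let rels : Set (FreeGroup (Fin 3)) :=
      {FreeGroup.of 0 ^ 2, FreeGroup.of 1 ^ 4, FreeGroup.of 2 ^ 4,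
        FreeGroup.of 0 * FreeGroup.of 1 * FreeGroup.of 2}
    let b : PresentedGroup rels := PresentedGroup.of 1
    let c : PresentedGroup rels := PresentedGroup.of 2
    let N : Subgroup (PresentedGroup rels) := Subgroup.closure {b * c⁻¹, b⁻¹ * c}
    N.Normal ∧ (∀ x ∈ N, ∀ y ∈ N, x * y = y * x) ∧
      ∃ φ : PresentedGroup rels →* Multiplicative (ZMod 4),
        Function.Surjective φ ∧ φ.ker = N := by
  intro rels b c N
  exact ⟨Stmt4Aux.hNnormal, Stmt4Aux.hNabelian,
    Stmt4Aux.φ, Stmt4Aux.φsurj, Stmt4Aux.φker⟩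
end

section
/- For every integer m, the presented group ⟨a, b, c, d, x ∣ x·a⁻², x·b⁻², x·c⁻², x·d⁻², a·b·c·d·x^{−m}⟩ is isomorphic to the presented group ⟨a, b, c ∣ a²·b⁻², a²·c⁻², a²·(a^{2m−1}·b⁻¹·c⁻¹)⁻²⟩. -/
/-!
In the first group the relators say `x = a² = b² = c² = d²` and `abcd = xᵐ`, so `x` and
`d = c⁻¹b⁻¹a^(2m-1)` can be eliminated (Tietze transformations). After replacing `a, b, c` by
their inverses, the surviving relation `d² = a²` is the third relator of the second group.
-/

open PresentedGroup

/-- Generators `a, b, c, d, x` are `0, 1, 2, 3, 4`. -/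
def basketRels (m : ℤ) : Set (FreeGroup (Fin 5)) :=
  {FreeGroup.of 4 * FreeGroup.of 0 ^ (-2 : ℤ),
    FreeGroup.of 4 * FreeGroup.of 1 ^ (-2 : ℤ),
    FreeGroup.of 4 * FreeGroup.of 2 ^ (-2 : ℤ),
    FreeGroup.of 4 * FreeGroup.of 3 ^ (-2 : ℤ),
    FreeGroup.of 0 * FreeGroup.of 1 * FreeGroup.of 2 * FreeGroup.of 3 * FreeGroup.of 4 ^ (-m)}

def reducedRels (m : ℤ) : Set (FreeGroup (Fin 3)) :=
  {FreeGroup.of 0 ^ 2 * FreeGroup.of 1 ^ (-2 : ℤ),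
    FreeGroup.of 0 ^ 2 * FreeGroup.of 2 ^ (-2 : ℤ),
    FreeGroup.of 0 ^ 2 *
      (FreeGroup.of 0 ^ (2 * m - 1) * (FreeGroup.of 1)⁻¹ * (FreeGroup.of 2)⁻¹) ^ (-2 : ℤ)}

namespace PresentedGroup

variable {α β : Type*} {rels : Set (FreeGroup α)} {rels' : Set (FreeGroup β)}

theorem lift_of_eq_one : ∀ r ∈ rels, FreeGroup.lift (of (rels := rels)) r = 1 := by
  rw [show FreeGroup.lift (of (rels := rels)) = mk rels from FreeGroup.ext_hom _ _ fun _ => by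
    simp [of]]
  exact fun _ => one_of_mem

def mulEquivOfToGroup {f : α → PresentedGroup rels'} {g : β → PresentedGroup rels}
    (hf : ∀ r ∈ rels, FreeGroup.lift f r = 1) (hg : ∀ r ∈ rels', FreeGroup.lift g r = 1)
    (hgf : ∀ i, toGroup hg (f i) = of i) (hfg : ∀ j, toGroup hf (g j) = of j) :
    PresentedGroup rels ≃* PresentedGroup rels' :=
  MonoidHom.toMulEquiv (toGroup hf) (toGroup hg) (ext fun i => by simp [toGroup.of, hgf])
    (ext fun j => by simp [toGroup.of, hfg])

end PresentedGroup

section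

variable {G H : Type*} [Group G] [Group H]

theorem mul_zpow_neg_two_eq_one_iff {x a : G} : x * a ^ (-2 : ℤ) = 1 ↔ x = a ^ 2 := by
  rw [zpow_neg, mul_inv_eq_one, zpow_ofNat]

def basketOfReduced (m : ℤ) (v : Fin 3 → G) : Fin 5 → G :=
  ![(v 0)⁻¹, (v 1)⁻¹, (v 2)⁻¹, v 2 * v 1 * v 0 ^ (1 - 2 * m), v 0 ^ (-2 : ℤ)]

def reducedOfBasket (w : Fin 5 → G) : Fin 3 → G :=
  ![(w 0)⁻¹, (w 1)⁻¹, (w 2)⁻¹]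

theorem map_comp_basketOfReduced (φ : G →* H) (m : ℤ) (v : Fin 3 → G) :
    φ ∘ basketOfReduced m v = basketOfReduced m (φ ∘ v) := by
  ext i; fin_cases i <;> simp [basketOfReduced]

theorem map_comp_reducedOfBasket (φ : G →* H) (w : Fin 5 → G) :
    φ ∘ reducedOfBasket w = reducedOfBasket (φ ∘ w) := by
  ext i; fin_cases i <;> simp [reducedOfBasket]

theorem reducedOfBasket_basketOfReduced (m : ℤ) (v : Fin 3 → G) :
    reducedOfBasket (basketOfReduced m v) = v := by
  ext i; fin_cases i <;> simp [reducedOfBasket, basketOfReduced]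

theorem basketOfReduced_reducedOfBasket {m : ℤ} {w : Fin 5 → G}
    (hw : ∀ r ∈ basketRels m, FreeGroup.lift w r = 1) :
    basketOfReduced m (reducedOfBasket w) = w := by
  simp only [basketRels, Set.forall_mem_insert, Set.mem_singleton_iff, forall_eq, map_mul,
    map_zpow, FreeGroup.lift_apply_of, mul_zpow_neg_two_eq_one_iff] at hw
  obtain ⟨hx, -, -, -, habcd⟩ := hw
  rw [hx] at habcd
  have hd : w 3 = (w 2)⁻¹ * (w 1)⁻¹ * w 0 ^ (2 * m - 1) :=
    calc w 3 = (w 2)⁻¹ * (w 1)⁻¹ * (w 0)⁻¹ * (w 0 * w 1 * w 2 * w 3 * (w 0 ^ 2) ^ (-m)) *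
          (w 0 ^ 2) ^ m := by group
      _ = (w 2)⁻¹ * (w 1)⁻¹ * w 0 ^ (2 * m - 1) := by rw [habcd]; group
  ext i
  fin_cases i <;> simp [basketOfReduced, reducedOfBasket, hx, hd]

theorem lift_basketOfReduced_eq_one {m : ℤ} {v : Fin 3 → G}
    (hv : ∀ r ∈ reducedRels m, FreeGroup.lift v r = 1) :
    ∀ r ∈ basketRels m, FreeGroup.lift (basketOfReduced m v) r = 1 := by
  simp only [reducedRels, Set.forall_mem_insert, Set.mem_singleton_iff, forall_eq, map_mul,
    map_zpow, map_pow, map_inv, FreeGroup.lift_apply_of, mul_zpow_neg_two_eq_one_iff] at hv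
  obtain ⟨hb, hc, hw⟩ := hv
  simp only [basketRels, Set.forall_mem_insert, Set.mem_singleton_iff, forall_eq, map_mul,
    map_zpow, FreeGroup.lift_apply_of, mul_zpow_neg_two_eq_one_iff, basketOfReduced,
    Matrix.cons_val]
  refine ⟨by group, ?_, ?_, ?_, by group⟩
  · rw [inv_pow, ← hb]; group
  · rw [inv_pow, ← hc]; group
  · rw [show v 2 * v 1 * v 0 ^ (1 - 2 * m) = (v 0 ^ (2 * m - 1) * (v 1)⁻¹ * (v 2)⁻¹)⁻¹ by group,
      inv_pow, ← hw]
    group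

theorem lift_reducedOfBasket_eq_one {m : ℤ} {w : Fin 5 → G}
    (hw : ∀ r ∈ basketRels m, FreeGroup.lift w r = 1) :
    ∀ r ∈ reducedRels m, FreeGroup.lift (reducedOfBasket w) r = 1 := by
  simp only [basketRels, Set.forall_mem_insert, Set.mem_singleton_iff, forall_eq, map_mul,
    map_zpow, FreeGroup.lift_apply_of, mul_zpow_neg_two_eq_one_iff] at hw
  obtain ⟨ha, hb, hc, hd, habcd⟩ := hw
  simp only [reducedRels, Set.forall_mem_insert, Set.mem_singleton_iff, forall_eq, map_mul,
    map_zpow, map_pow, map_inv, FreeGroup.lift_apply_of, mul_zpow_neg_two_eq_one_iff,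
    reducedOfBasket, Matrix.cons_val]
  refine ⟨by rw [inv_pow, inv_pow, ← ha, ← hb], by rw [inv_pow, inv_pow, ← ha, ← hc], ?_⟩
  rw [ha] at habcd
  have hd_inv : (w 0)⁻¹ ^ (2 * m - 1) * (w 1)⁻¹⁻¹ * (w 2)⁻¹⁻¹ = (w 3)⁻¹ :=
    calc (w 0)⁻¹ ^ (2 * m - 1) * (w 1)⁻¹⁻¹ * (w 2)⁻¹⁻¹
        = (w 0 ^ 2) ^ (-m) * (w 0 * w 1 * w 2 * w 3 * (w 0 ^ 2) ^ (-m)) * (w 0 ^ 2) ^ m *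
            (w 3)⁻¹ := by group
      _ = (w 3)⁻¹ := by rw [habcd]; group
  rw [hd_inv, inv_pow, inv_pow, ← hd, ha]

end

/-- For every integer `m`, the presented group
`⟨a, b, c, d, x ∣ x·a⁻², x·b⁻², x·c⁻², x·d⁻², a·b·c·d·x^{−m}⟩` is isomorphic to
`⟨a, b, c ∣ a²·b⁻², a²·c⁻², a²·(a^{2m−1}·b⁻¹·c⁻¹)⁻²⟩`.
(Generators of the first group: `a,b,c,d,x = 0,1,2,3,4`.) -/
theorem stmt_6 (m : ℤ) :
    let rels₁ : Set (FreeGroup (Fin 5)) :=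
      {FreeGroup.of 4 * FreeGroup.of 0 ^ (-2 : ℤ),
        FreeGroup.of 4 * FreeGroup.of 1 ^ (-2 : ℤ),
        FreeGroup.of 4 * FreeGroup.of 2 ^ (-2 : ℤ),
        FreeGroup.of 4 * FreeGroup.of 3 ^ (-2 : ℤ),
        FreeGroup.of 0 * FreeGroup.of 1 * FreeGroup.of 2 * FreeGroup.of 3 *
          FreeGroup.of 4 ^ (-m)}
    let rels₂ : Set (FreeGroup (Fin 3)) :=
      {FreeGroup.of 0 ^ 2 * FreeGroup.of 1 ^ (-2 : ℤ),
        FreeGroup.of 0 ^ 2 * FreeGroup.of 2 ^ (-2 : ℤ),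
        FreeGroup.of 0 ^ 2 *
          (FreeGroup.of 0 ^ (2 * m - 1) * (FreeGroup.of 1)⁻¹ * (FreeGroup.of 2)⁻¹) ^ (-2 : ℤ)}
    Nonempty (PresentedGroup rels₁ ≃* PresentedGroup rels₂) := by
  show Nonempty (PresentedGroup (basketRels m) ≃* PresentedGroup (reducedRels m))
  have hf := lift_basketOfReduced_eq_one (lift_of_eq_one (rels := reducedRels m))
  have hg := lift_reducedOfBasket_eq_one (lift_of_eq_one (rels := basketRels m))
  refine ⟨mulEquivOfToGroup hf hg (fun i => ?_) (fun j => ?_)⟩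
  · have hgof : toGroup hg ∘ of = reducedOfBasket of := funext fun _ => toGroup.of hg
    rw [← Function.comp_apply (f := toGroup hg), map_comp_basketOfReduced, hgof,
      basketOfReduced_reducedOfBasket (lift_of_eq_one (rels := basketRels m))]
  · have hfof : toGroup hf ∘ of = basketOfReduced m of := funext fun _ => toGroup.of hf
    rw [← Function.comp_apply (f := toGroup hf), map_comp_reducedOfBasket, hfof,
      reducedOfBasket_basketOfReduced]
end

section
/- Let m be an integer and let G be the presented group ⟨a, b, c, d, x ∣ x·a⁻², x·b⁻², x·c⁻², x·d⁻², a·b·c·d·x^{−m}⟩. Then: (i) the element x is central in G; (ii) the subgroup N of G generated by ab, bc and x is a normal subgroup of index 2; and (iii) the commutator subgroup of N is contained in the cyclic subgroup generated by x, so N is solvable of derived length at most 2. -/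
/-!
Each of `a, b, c, d` squares to `x`, so `x` commutes with every generator and is central.
Since squares of generators lie in `N`, the condition `u * v ∈ N` says that `u` and `v` lie in
the same left coset of `N`; the products `ab`, `bc` and `cd = (ab)⁻¹ xᵐ` put all four generators
in one coset, so every product of two generators lies in `N`, whence `G = N ∪ N a`. The sign map
`a, b, c, d ↦ -1`, `x ↦ 1` to `ℤˣ` shows `a ∉ N`, so the index is `2`. Modulo `⟨x⟩` the images
of `a, b, c, d` are involutions with product `1`, and then `(ab)(bc) = ac = (bc)(ab)`, so the
image of `N` is abelian and `⁅N, N⁆ ≤ ⟨x⟩`.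
-/

namespace Subgroup

variable {G : Type*} [Group G]

theorem normal_of_le_center {H : Subgroup G} (h : H ≤ center G) : H.Normal :=
  ⟨fun n hn g => by rwa [mem_center_iff.mp (h hn) g, mul_inv_cancel_right]⟩

theorem mem_center_of_forall_mul_self_eq {S : Set G} (hS : closure S = ⊤) {z : G}
    (h : ∀ s ∈ S, s * s = z) : z ∈ center G := by
  simp only [center_eq_iInf hS, mem_iInf]
  intro s hs
  rw [mem_centralizer_singleton_iff, ← h s hs, mul_assoc]

theorem mul_mem_iff_mk_eq_mk {H : Subgroup G} {s t : G} (hs : s * s ∈ H) :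
    s * t ∈ H ↔ (s : G ⧸ H) = t := by
  rw [QuotientGroup.eq, show s⁻¹ * t = (s * s)⁻¹ * (s * t) by group,
    mul_mem_cancel_left (inv_mem hs)]

theorem mem_or_mul_mem_of_forall_mul_mem {S : Set G} (hS : closure S = ⊤) {H : Subgroup G}
    (hH : ∀ s ∈ S, ∀ t ∈ S, s * t ∈ H) {s₀ : G} (hs₀ : s₀ ∈ S) (g : G) :
    g ∈ H ∨ g * s₀ ∈ H := by
  have hg : g ∈ closure S := hS ▸ mem_top g
  induction hg using closure_induction_right with
  | one => exact .inl (one_mem H)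
  | mul_right g _ s hs ih =>
    rcases ih with h | h
    · exact .inr (by rw [mul_assoc]; exact mul_mem h (hH s hs s₀ hs₀))
    · refine .inl ?_
      rw [show g * s = g * s₀ * ((s₀ * s₀)⁻¹ * (s₀ * s)) by group]
      exact mul_mem h (mul_mem (inv_mem (hH s₀ hs₀ s₀ hs₀)) (hH s₀ hs₀ s hs))
  | mul_inv_cancel g _ s hs ih =>
    rcases ih with h | h
    · refine .inr ?_
      rw [show g * s⁻¹ * s₀ = g * ((s * s)⁻¹ * (s * s₀)) by group]
      exact mul_mem h (mul_mem (inv_mem (hH s hs s hs)) (hH s hs s₀ hs₀))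
    · refine .inl ?_
      rw [show g * s⁻¹ = g * s₀ * (s * s₀)⁻¹ by group]
      exact mul_mem h (inv_mem (hH s hs s₀ hs₀))

theorem index_eq_two_of_forall_mul_mem {S : Set G} (hS : closure S = ⊤) {H : Subgroup G}
    (hH : ∀ s ∈ S, ∀ t ∈ S, s * t ∈ H) {s₀ : G} (hs₀ : s₀ ∈ S) (hs₀H : s₀ ∉ H) :
    H.index = 2 := by
  refine index_eq_two_iff.mpr ⟨s₀, fun g => (xor_iff_or_and_not_and _ _).mpr
    ⟨(mem_or_mul_mem_of_forall_mul_mem hS hH hs₀ g).symm, ?_⟩⟩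
  rintro ⟨hgs₀, hg⟩
  exact hs₀H ((mul_mem_cancel_left hg).mp hgs₀)

theorem commutator_closure_le_of_commute {S : Set G} {K : Subgroup G} [K.Normal]
    (h : ∀ s ∈ S, ∀ t ∈ S, Commute (s : G ⧸ K) t) : ⁅closure S, closure S⁆ ≤ K := by
  rw [← QuotientGroup.ker_mk' K, ← map_eq_bot_iff, map_commutator, MonoidHom.map_closure,
    commutator_eq_bot_iff_le_centralizer]
  have := isMulCommutative_closure (k := QuotientGroup.mk' K '' S)
    (by rintro _ ⟨s, hs, rfl⟩ _ ⟨t, ht, rfl⟩; exact h s hs t ht)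
  exact le_centralizer _

theorem derivedSeries_two_eq_bot_of_commutator_le {H K : Subgroup G} [IsMulCommutative K]
    (h : ⁅H, H⁆ ≤ K) : derivedSeries H 2 = ⊥ := by
  refine (map_eq_bot_iff_of_injective _ H.subtype_injective).mp (le_bot_iff.mp ?_)
  simp only [derivedSeries_succ, derivedSeries_zero, map_commutator, ← MonoidHom.range_eq_map,
    range_subtype]
  exact (commutator_mono h h).trans (commutator_eq_bot_iff_le_centralizer.mpr (le_centralizer K)).le

end Subgroup

theorem commute_mul_mul_of_mul_self_eq_one {G : Type*} [Group G] {a b c d : G}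
    (ha : a * a = 1) (hb : b * b = 1) (hc : c * c = 1) (hd : d * d = 1)
    (habcd : a * b * c * d = 1) : Commute (a * b) (b * c) := by
  have habc : a * b * c * (a * b * c) = 1 := by
    rw [eq_inv_of_mul_eq_one_left habcd, ← mul_inv_rev, hd, inv_one]
  calc a * b * (b * c) = a * (b * b) * c := by group
    _ = a * c := by rw [hb, mul_one]
    _ = a⁻¹ * (a * b * c * (a * b * c)) * c⁻¹ := by
      rw [habc, mul_one, inv_eq_of_mul_eq_one_left ha, inv_eq_of_mul_eq_one_left hc]
    _ = b * c * (a * b) := by group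

open Subgroup

theorem mul_mem_closure_of_mul_self_eq {G : Type*} [Group G] {a b c d x : G} {m : ℤ}
    (ha : a * a = x) (hb : b * b = x) (hc : c * c = x) (hd : d * d = x)
    (habcd : a * b * c * d = x ^ m) :
    ∀ u ∈ ({a, b, c, d} : Set G), ∀ v ∈ ({a, b, c, d} : Set G),
      u * v ∈ closure {a * b, b * c, x} := by
  set N := closure {a * b, b * c, x}
  have habN : a * b ∈ N := subset_closure (by simp)
  have hxN : x ∈ N := subset_closure (by simp)
  have hsq : ∀ u ∈ ({a, b, c, d} : Set G), u * u ∈ N := by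
    rintro u (rfl | rfl | rfl | rfl) <;> simpa [ha, hb, hc, hd]
  have hcdN : c * d ∈ N := by
    rw [show c * d = (a * b)⁻¹ * (a * b * c * d) by group, habcd]
    exact mul_mem (inv_mem habN) (zpow_mem hxN m)
  have hab : (a : G ⧸ N) = b := (mul_mem_iff_mk_eq_mk (hsq a (by simp))).mp habN
  have hbc : (b : G ⧸ N) = c :=
    (mul_mem_iff_mk_eq_mk (hsq b (by simp))).mp (subset_closure (by simp))
  have hcd : (c : G ⧸ N) = d := (mul_mem_iff_mk_eq_mk (hsq c (by simp))).mp hcdN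
  have hmk : ∀ u ∈ ({a, b, c, d} : Set G), (u : G ⧸ N) = a := by
    rintro u (rfl | rfl | rfl | rfl)
    exacts [rfl, hab.symm, (hab.trans hbc).symm, (hab.trans (hbc.trans hcd)).symm]
  intro u hu v hv
  exact (mul_mem_iff_mk_eq_mk (hsq u hu)).mpr ((hmk u hu).trans (hmk v hv).symm)

theorem commutator_closure_le_zpowers {G : Type*} [Group G] {a b c d x : G} {m : ℤ}
    (hx : x ∈ center G) (ha : a * a = x) (hb : b * b = x) (hc : c * c = x) (hd : d * d = x)
    (habcd : a * b * c * d = x ^ m) :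
    ⁅closure {a * b, b * c, x}, closure {a * b, b * c, x}⁆ ≤ zpowers x := by
  have := normal_of_le_center (zpowers_le.mpr hx)
  have hx1 : (x : G ⧸ zpowers x) = 1 := (QuotientGroup.eq_one_iff x).mpr (mem_zpowers x)
  have hsq : ∀ u : G, u * u = x → (u : G ⧸ zpowers x) * u = 1 := fun u hu => by
    rw [← QuotientGroup.mk_mul, hu, hx1]
  have hprod : (a : G ⧸ zpowers x) * b * c * d = 1 := by
    rw [← QuotientGroup.mk_mul, ← QuotientGroup.mk_mul, ← QuotientGroup.mk_mul, habcd,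
      QuotientGroup.mk_zpow, hx1, one_zpow]
  have hcomm := commute_mul_mul_of_mul_self_eq_one (hsq a ha) (hsq b hb) (hsq c hc) (hsq d hd) hprod
  apply commutator_closure_le_of_commute
  rintro s (rfl | rfl | rfl) t (rfl | rfl | rfl) <;> simp [hx1, hcomm, hcomm.symm]

namespace Basket2222

variable (m : ℤ)

def rels : Set (FreeGroup (Fin 5)) :=
  {FreeGroup.of 4 * FreeGroup.of 0 ^ (-2 : ℤ),
    FreeGroup.of 4 * FreeGroup.of 1 ^ (-2 : ℤ),
    FreeGroup.of 4 * FreeGroup.of 2 ^ (-2 : ℤ),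
    FreeGroup.of 4 * FreeGroup.of 3 ^ (-2 : ℤ),
    FreeGroup.of 0 * FreeGroup.of 1 * FreeGroup.of 2 * FreeGroup.of 3 * FreeGroup.of 4 ^ (-m)}

def a : PresentedGroup (rels m) := .of 0
def b : PresentedGroup (rels m) := .of 1
def c : PresentedGroup (rels m) := .of 2
def d : PresentedGroup (rels m) := .of 3
def x : PresentedGroup (rels m) := .of 4

variable {m}

theorem of_mul_self {i : Fin 5} (h : FreeGroup.of 4 * FreeGroup.of i ^ (-2 : ℤ) ∈ rels m) :
    (.of i : PresentedGroup (rels m)) * .of i = x m := by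
  have := PresentedGroup.one_of_mem h
  rw [map_mul, map_zpow, zpow_neg, mul_inv_eq_one] at this
  exact (zpow_two _).symm.trans this.symm

variable (m)

theorem a_mul_self : a m * a m = x m := of_mul_self (by simp [rels])
theorem b_mul_self : b m * b m = x m := of_mul_self (by simp [rels])
theorem c_mul_self : c m * c m = x m := of_mul_self (by simp [rels])
theorem d_mul_self : d m * d m = x m := of_mul_self (by simp [rels])

theorem a_mul_b_mul_c_mul_d : a m * b m * c m * d m = x m ^ m :=
  mul_inv_eq_one.mp (by rw [← zpow_neg]; exact PresentedGroup.one_of_mem (by simp [rels]))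

theorem closure_a_b_c_d : closure {a m, b m, c m, d m} = ⊤ := by
  rw [eq_top_iff, ← PresentedGroup.closure_range_of, closure_le]
  have hS : ∀ u ∈ ({a m, b m, c m, d m} : Set _), u ∈ closure {a m, b m, c m, d m} :=
    fun u hu => subset_closure hu
  rintro _ ⟨i, rfl⟩
  fin_cases i
  exacts [hS _ (by simp [a]), hS _ (by simp [b]), hS _ (by simp [c]), hS _ (by simp [d]),
    (a_mul_self m ▸ mul_mem (hS _ (by simp)) (hS _ (by simp)) : x m ∈ _)]

theorem a_notMem_closure : a m ∉ closure {a m * b m, b m * c m, x m} := by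
  have hparity : ∀ r ∈ rels m,
      FreeGroup.lift (fun i : Fin 5 => if i = 4 then (1 : ℤˣ) else -1) r = 1 := by
    simp [rels]
  let φ := PresentedGroup.toGroup hparity
  have hφ : closure {a m * b m, b m * c m, x m} ≤ φ.ker := (closure_le _).mpr (by
    rintro _ (rfl | rfl | rfl) <;> simp [φ, a, b, c, x, PresentedGroup.toGroup.of])
  intro h
  simpa [φ, a, PresentedGroup.toGroup.of] using hφ h

end Basket2222

/-- In `G = ⟨a, b, c, d, x ∣ x·a⁻², x·b⁻², x·c⁻², x·d⁻², a·b·c·d·x^{−m}⟩`: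
(i) `x` is central; (ii) the subgroup `N` generated by `ab`, `bc` and `x` is normal of
index `2`; (iii) the commutator subgroup `⁅N, N⁆` is contained in the cyclic subgroup
generated by `x`, so `N` is solvable of derived length at most `2`. -/
theorem stmt_7 (m : ℤ) :
    let rels : Set (FreeGroup (Fin 5)) :=
      {FreeGroup.of 4 * FreeGroup.of 0 ^ (-2 : ℤ),
        FreeGroup.of 4 * FreeGroup.of 1 ^ (-2 : ℤ),
        FreeGroup.of 4 * FreeGroup.of 2 ^ (-2 : ℤ),
        FreeGroup.of 4 * FreeGroup.of 3 ^ (-2 : ℤ),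
        FreeGroup.of 0 * FreeGroup.of 1 * FreeGroup.of 2 * FreeGroup.of 3 *
          FreeGroup.of 4 ^ (-m)}
    let a : PresentedGroup rels := PresentedGroup.of 0
    let b : PresentedGroup rels := PresentedGroup.of 1
    let c : PresentedGroup rels := PresentedGroup.of 2
    let x : PresentedGroup rels := PresentedGroup.of 4
    let N : Subgroup (PresentedGroup rels) := Subgroup.closure {a * b, b * c, x}
    x ∈ Subgroup.center (PresentedGroup rels) ∧
      N.Normal ∧ N.index = 2 ∧
      ⁅N, N⁆ ≤ Subgroup.zpowers x ∧ derivedSeries ↥N 2 = ⊥ := by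
  intro rels a b c x N
  have ha := Basket2222.a_mul_self m
  have hb := Basket2222.b_mul_self m
  have hc := Basket2222.c_mul_self m
  have hd := Basket2222.d_mul_self m
  have habcd := Basket2222.a_mul_b_mul_c_mul_d m
  have hgen := Basket2222.closure_a_b_c_d m
  have hx : x ∈ center _ :=
    mem_center_of_forall_mul_self_eq hgen (by rintro u (rfl | rfl | rfl | rfl) <;> assumption)
  have hindex : N.index = 2 := index_eq_two_of_forall_mul_mem hgen
    (mul_mem_closure_of_mul_self_eq ha hb hc hd habcd) (by simp) (Basket2222.a_notMem_closure m)
  have hcomm : ⁅N, N⁆ ≤ zpowers x := commutator_closure_le_zpowers hx ha hb hc hd habcd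
  exact ⟨hx, normal_of_index_eq_two hindex, hindex, hcomm,
    derivedSeries_two_eq_bot_of_commutator_le hcomm⟩
end

section
/- Let s and t be integers and let G be the presented group ⟨a, b ∣ a²·b⁻², (ab)^s·a^{2t}⟩. Then: (i) the element a² is central in G; (ii) the subgroup N of G generated by ab and a² is abelian and normal in G; and (iii) the quotient G/N is cyclic of order 2. -/
/-- In `G = ⟨a, b ∣ a²·b⁻², (ab)^s·a^{2t}⟩`: (i) `a²` is central;
(ii) the subgroup `N` generated by `ab` and `a²` is abelian and normal; and
(iii) `G/N` is cyclic of order `2` (expressed by a surjective homomorphism onto `ℤ/2ℤ`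
with kernel `N`). -/
theorem stmt_8 (s t : ℤ) :
    let rels : Set (FreeGroup (Fin 2)) :=
      {FreeGroup.of 0 ^ 2 * FreeGroup.of 1 ^ (-2 : ℤ),
        (FreeGroup.of 0 * FreeGroup.of 1) ^ s * FreeGroup.of 0 ^ (2 * t)}
    let a : PresentedGroup rels := PresentedGroup.of 0
    let b : PresentedGroup rels := PresentedGroup.of 1
    let N : Subgroup (PresentedGroup rels) := Subgroup.closure {a * b, a ^ 2}
    a ^ 2 ∈ Subgroup.center (PresentedGroup rels) ∧
      (∀ x ∈ N, ∀ y ∈ N, x * y = y * x) ∧ N.Normal ∧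
      ∃ φ : PresentedGroup rels →* Multiplicative (ZMod 2),
        Function.Surjective φ ∧ φ.ker = N := by
  intro rels a b N
  -- the defining relations hold in the presented group
  have hrel : ∀ r ∈ rels, PresentedGroup.mk rels r = 1 := fun r hr =>
    (QuotientGroup.eq_one_iff r).mpr (Subgroup.subset_normalClosure hr)
  have hab2 : a ^ 2 = b ^ 2 := by
    have h := hrel _ (Set.mem_insert _ _)
    rw [map_mul, map_pow, map_zpow] at h
    change a ^ 2 * b ^ (-2 : ℤ) = 1 at h
    have h' : a ^ 2 * b ^ (-2 : ℤ) * b ^ 2 = 1 * b ^ 2 := by rw [h]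
    rw [one_mul] at h'
    rw [← h']; group
  -- a^2 commutes with everything
  have hcomm : ∀ g : PresentedGroup rels, Commute (a ^ 2) g := by
    intro g
    refine PresentedGroup.generated_by rels
      { carrier := {g | Commute (a ^ 2) g}
        one_mem' := Commute.one_right _
        mul_mem' := fun h1 h2 => h1.mul_right h2
        inv_mem' := fun h => h.inv_right } ?_ g
    intro j
    fin_cases j
    · exact (Commute.refl a).pow_left 2
    · show Commute (a ^ 2) b
      rw [hab2]; exact (Commute.refl b).pow_left 2
  have hcm : ∀ g : PresentedGroup rels, a ^ 2 * g = g * a ^ 2 := fun g => (hcomm g).eq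
  have hcent : a ^ 2 ∈ Subgroup.center (PresentedGroup rels) :=
    Subgroup.mem_center_iff.mpr fun g => ((hcomm g).symm).eq
  -- membership of generators
  have habN : a * b ∈ N := Subgroup.subset_closure (Set.mem_insert _ _)
  have ha2N : a ^ 2 ∈ N := Subgroup.subset_closure (Set.mem_insert_iff.mpr (Or.inr rfl))
  -- key computation : b * a = a^4 * (a*b)⁻¹
  have hba : b * a = a ^ 4 * (a * b)⁻¹ := by
    calc b * a = b ^ 2 * (a * b)⁻¹ * a ^ 2 := by rw [mul_inv_rev]; group
      _ = a ^ 2 * (a * b)⁻¹ * a ^ 2 := by rw [← hab2]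
      _ = a ^ 2 * (a ^ 2 * (a * b)⁻¹) := by rw [mul_assoc, ← hcm]
      _ = a ^ 4 * (a * b)⁻¹ := by group
  have hbaN : b * a ∈ N := by
    rw [hba]
    have h4 : a ^ 4 ∈ N := by
      rw [show a ^ 4 = (a ^ 2) ^ 2 by group]
      exact N.pow_mem ha2N 2
    exact N.mul_mem h4 (N.inv_mem habN)
  -- conjugation of the generator a*b by a, a⁻¹, b, b⁻¹
  have f1 : a * (a * b) * a⁻¹ = b * a := by
    calc a * (a * b) * a⁻¹ = a ^ 2 * (b * a) * (a ^ 2)⁻¹ := by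
          simp only [pow_two]; group
      _ = b * a * a ^ 2 * (a ^ 2)⁻¹ := by rw [hcm]
      _ = b * a := by group
  have f2 : a⁻¹ * (a * b) * a = b * a := by group
  have f3 : b * (a * b) * b⁻¹ = b * a := by group
  have f4 : b⁻¹ * (a * b) * b = b * a := by
    calc b⁻¹ * (a * b) * b = (b ^ 2)⁻¹ * (b * (a * b) * b⁻¹) * b ^ 2 := by
          simp only [pow_two]; group
      _ = (a ^ 2)⁻¹ * (b * a) * a ^ 2 := by rw [f3, ← hab2]
      _ = (a ^ 2)⁻¹ * (a ^ 2 * (b * a)) := by rw [mul_assoc, ← hcm]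
      _ = b * a := by group
  -- conjugation of a^2 is trivial
  have hconj_a2 : ∀ g : PresentedGroup rels, g * a ^ 2 * g⁻¹ = a ^ 2 := by
    intro g
    rw [← hcm]; group
  -- conjugation by g preserves N, provided it sends a*b into N
  have conj_gen : ∀ g : PresentedGroup rels, g * (a * b) * g⁻¹ ∈ N →
      ∀ n ∈ N, g * n * g⁻¹ ∈ N := by
    intro g h1 n hn
    induction hn using Subgroup.closure_induction with
    | mem x hx =>
      simp only [Set.mem_insert_iff, Set.mem_singleton_iff] at hx
      rcases hx with rfl | rfl
      · exact h1
      · rw [hconj_a2]; exact ha2N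
    | one => simpa using N.one_mem
    | mul x y hx hy ihx ihy =>
      rw [show g * (x * y) * g⁻¹ = (g * x * g⁻¹) * (g * y * g⁻¹) by group]
      exact N.mul_mem ihx ihy
    | inv x hx ihx =>
      rw [show g * x⁻¹ * g⁻¹ = (g * x * g⁻¹)⁻¹ by group]
      exact N.inv_mem ihx
  -- every element conjugates N into itself
  have hH : ∀ g : PresentedGroup rels,
      (∀ n ∈ N, g * n * g⁻¹ ∈ N) ∧ (∀ n ∈ N, g⁻¹ * n * g ∈ N) := by
    intro g
    refine PresentedGroup.generated_by rels
      { carrier := {g | (∀ n ∈ N, g * n * g⁻¹ ∈ N) ∧ (∀ n ∈ N, g⁻¹ * n * g ∈ N)}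
        one_mem' := ⟨fun n hn => by simpa using hn, fun n hn => by simpa using hn⟩
        mul_mem' := fun {x y} hx hy =>
          ⟨fun n hn => by
            rw [show x * y * n * (x * y)⁻¹ = x * (y * n * y⁻¹) * x⁻¹ by group]
            exact hx.1 _ (hy.1 n hn),
          fun n hn => by
            rw [show (x * y)⁻¹ * n * (x * y) = y⁻¹ * (x⁻¹ * n * x) * y by group]
            exact hy.2 _ (hx.2 n hn)⟩
        inv_mem' := fun {x} hx =>
          ⟨fun n hn => by rw [inv_inv]; exact hx.2 n hn,
           fun n hn => by rw [inv_inv]; exact hx.1 n hn⟩ } ?_ g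
    intro j
    fin_cases j
    · refine ⟨conj_gen a (by rw [f1]; exact hbaN), ?_⟩
      intro n hn
      have := conj_gen a⁻¹ (by rw [inv_inv, f2]; exact hbaN) n hn
      rwa [inv_inv] at this
    · refine ⟨conj_gen b (by rw [f3]; exact hbaN), ?_⟩
      intro n hn
      have := conj_gen b⁻¹ (by rw [inv_inv, f4]; exact hbaN) n hn
      rwa [inv_inv] at this
  have hNnormal : N.Normal := ⟨fun n hn g => (hH g).1 n hn⟩
  -- N is abelian
  have habel : ∀ x ∈ N, ∀ y ∈ N, x * y = y * x := by
    intro x hx y hy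
    refine Subgroup.closure_induction₂ (p := fun x y _ _ => Commute x y)
      ?_ (fun x _ => Commute.one_left x) (fun x _ => Commute.one_right x)
      (fun x y z _ _ _ h1 h2 => h1.mul_left h2)
      (fun y z x _ _ _ h1 h2 => h1.mul_right h2)
      (fun x y _ _ h => h.inv_left) (fun x y _ _ h => h.inv_right) hx hy
    intro u v hu hv
    simp only [Set.mem_insert_iff, Set.mem_singleton_iff] at hu hv
    rcases hu with rfl | rfl <;> rcases hv with rfl | rfl
    · exact Commute.refl _
    · exact (hcomm (a * b)).symm
    · exact hcomm (a * b)
    · exact Commute.refl _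
  -- parity: every element is in N or in a·N
  have parity : ∀ x : PresentedGroup rels, x ∈ N ∨ a⁻¹ * x ∈ N := by
    intro x
    refine PresentedGroup.generated_by rels
      { carrier := {x | x ∈ N ∨ a⁻¹ * x ∈ N}
        one_mem' := Or.inl N.one_mem
        mul_mem' := by
          rintro x y (hx | hx) (hy | hy)
          · exact Or.inl (N.mul_mem hx hy)
          · right
            rw [show a⁻¹ * (x * y) = (a⁻¹ * x * a) * (a⁻¹ * y) by group]
            exact N.mul_mem ((hH a).2 x hx) hy
          · right
            rw [show a⁻¹ * (x * y) = (a⁻¹ * x) * y by group]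
            exact N.mul_mem hx hy
          · left
            rw [show x * y = a ^ 2 * (a⁻¹ * (a⁻¹ * x) * a) * (a⁻¹ * y) by group]
            exact N.mul_mem (N.mul_mem ha2N ((hH a).2 _ hx)) hy
        inv_mem' := by
          rintro x (hx | hx)
          · exact Or.inl (N.inv_mem hx)
          · right
            rw [show a⁻¹ * x⁻¹ = (a⁻¹ * (a⁻¹ * x)⁻¹ * a) * (a ^ 2)⁻¹ by group]
            exact N.mul_mem ((hH a).2 _ (N.inv_mem hx)) (N.inv_mem ha2N) } ?_ x
    intro j
    fin_cases j
    · refine Or.inr ?_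
      show a⁻¹ * a ∈ N
      rw [inv_mul_cancel]; exact N.one_mem
    · refine Or.inr ?_
      show a⁻¹ * b ∈ N
      rw [show a⁻¹ * b = (a ^ 2)⁻¹ * (a * b) by group]
      exact N.mul_mem (N.inv_mem ha2N) habN
  -- the homomorphism to ZMod 2
  have hφrels : ∀ r ∈ rels,
      FreeGroup.lift (fun _ : Fin 2 => Multiplicative.ofAdd (1 : ZMod 2)) r = 1 := by
    intro r hr
    rcases Set.mem_insert_iff.mp hr with rfl | hr
    · rw [map_mul, map_pow, map_zpow, FreeGroup.lift_apply_of, FreeGroup.lift_apply_of]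
      decide
    · rw [Set.mem_singleton_iff.mp hr, map_mul, map_zpow, map_zpow, map_mul,
        FreeGroup.lift_apply_of, FreeGroup.lift_apply_of,
        show Multiplicative.ofAdd (1 : ZMod 2) * Multiplicative.ofAdd (1 : ZMod 2) = 1 by decide,
        one_zpow, one_mul, zpow_mul,
        show (Multiplicative.ofAdd (1 : ZMod 2)) ^ (2 : ℤ) = 1 by decide, one_zpow]
  refine ⟨hcent, habel, hNnormal, PresentedGroup.toGroup hφrels, ?_, ?_⟩
  · -- surjectivity
    intro y
    have hy := (by decide :
      ∀ z : Multiplicative (ZMod 2), z = 1 ∨ z = Multiplicative.ofAdd (1 : ZMod 2)) y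
    rcases hy with rfl | rfl
    · exact ⟨1, map_one _⟩
    · exact ⟨a, PresentedGroup.toGroup.of hφrels⟩
  · -- kernel = N
    have hφa : PresentedGroup.toGroup hφrels a = Multiplicative.ofAdd (1 : ZMod 2) :=
      PresentedGroup.toGroup.of hφrels
    have hφb : PresentedGroup.toGroup hφrels b = Multiplicative.ofAdd (1 : ZMod 2) :=
      PresentedGroup.toGroup.of hφrels
    have hNker : N ≤ (PresentedGroup.toGroup hφrels).ker := by
      refine (Subgroup.closure_le _).mpr ?_
      rintro x hx
      simp only [Set.mem_insert_iff, Set.mem_singleton_iff] at hx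
      rcases hx with rfl | rfl
      · show PresentedGroup.toGroup hφrels (a * b) = 1
        rw [map_mul, hφa, hφb]; decide
      · show PresentedGroup.toGroup hφrels (a ^ 2) = 1
        rw [map_pow, hφa]; decide
    refine le_antisymm ?_ hNker
    intro x hx
    rcases parity x with h | h
    · exact h
    · exfalso
      have h1 : PresentedGroup.toGroup hφrels (a⁻¹ * x) = 1 := hNker h
      rw [map_mul, map_inv, hφa, MonoidHom.mem_ker.mp hx, mul_one] at h1
      exact absurd h1 (by decide)
end

section
/- The presented group G = ⟨γ₁, γ₂, γ₃, γ₄ ∣ [γ_i, γ_j] for all 1 ≤ i < j ≤ 4; γ₁⁻²·γ₂γ₃γ₄; γ₂⁻²·γ₁γ₃γ₄; γ₃⁻²·γ₁γ₂γ₄; γ₄⁻²·γ₁γ₂γ₃⟩ is isomorphic to (ℤ/3ℤ)³. -/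
/-!
Index the generators by `Fin 4`, as `γ₀, …, γ₃`. The commutator relators make the group abelian,
and then the relator `γᵢ⁻²γⱼγₖγₗ` says `γᵢ³ = γ₀γ₁γ₂γ₃ =: P` for every `i`. Multiplying the four
cubes gives `P³ = P⁴`, so `P = 1`: the group is the abelian group on `γ₁, γ₂, γ₃` of exponent `3`,
with `γ₀ = (γ₁γ₂γ₃)⁻¹`. The isomorphism sends `γ₁, γ₂, γ₃` to the standard basis of `(ℤ/3ℤ)³` and
`γ₀` to `(-1, -1, -1)`.
-/

open PresentedGroup

theorem mul_comm_of_closure_eq_top {G : Type*} [Group G] {s : Set G}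
    (hs : Subgroup.closure s = ⊤) (hcomm : ∀ x ∈ s, ∀ y ∈ s, x * y = y * x) (x y : G) :
    x * y = y * x := by
  have hle := Subgroup.closure_le_centralizer_centralizer s
  rw [hs] at hle
  exact Set.centralizer_centralizer_comm_of_comm hcomm x (hle trivial) y (hle trivial)

theorem sq_eq_of_zpow_neg_two_mul_eq_one {G : Type*} [Group G] {x y : G}
    (h : x ^ (-2 : ℤ) * y = 1) : x ^ 2 = y := by
  rwa [zpow_neg, inv_mul_eq_one, zpow_ofNat] at h

theorem prod_eq_one_of_pow_three_eq_prod {G : Type*} [CommGroup G] {x : Fin 4 → G}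
    (h : ∀ i, x i ^ 3 = ∏ j, x j) : ∏ j, x j = 1 := by
  have hcube : (∏ j, x j) ^ 3 = (∏ j, x j) ^ 3 * ∏ j, x j := by
    calc (∏ j, x j) ^ 3 = ∏ i, x i ^ 3 := (Finset.prod_pow _ _ _).symm
      _ = (∏ j, x j) ^ 4 := by simp only [h, Finset.prod_const, Finset.card_univ, Fintype.card_fin]
      _ = (∏ j, x j) ^ 3 * ∏ j, x j := pow_succ _ _
  exact left_eq_mul.mp hcube

theorem pow_zmod_val_add {M : Type*} [Monoid M] {n : ℕ} [NeZero n] {x : M} (hx : x ^ n = 1)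
    (a b : ZMod n) : x ^ (a + b).val = x ^ a.val * x ^ b.val := by
  rw [ZMod.val_add, ← pow_eq_pow_mod _ hx, pow_add]

def coneRelators : Set (FreeGroup (Fin 4)) :=
  {w | ∃ i j : Fin 4, i < j ∧ w = .of i * .of j * (.of i)⁻¹ * (.of j)⁻¹} ∪
    {.of 0 ^ (-2 : ℤ) * .of 1 * .of 2 * .of 3,
      .of 1 ^ (-2 : ℤ) * .of 0 * .of 2 * .of 3,
      .of 2 ^ (-2 : ℤ) * .of 0 * .of 1 * .of 3,
      .of 3 ^ (-2 : ℤ) * .of 0 * .of 1 * .of 2}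

abbrev ConeGroup : Type := PresentedGroup coneRelators

namespace ConeGroup

theorem of_mul_of_comm (i j : Fin 4) :
    (of i : ConeGroup) * of j = of j * of i := by
  wlog hij : i < j generalizing i j
  · rcases (not_lt.mp hij).eq_or_lt with rfl | hji
    · rfl
    · exact (this j i hji).symm
  have h := one_of_mem (rels := coneRelators) (Or.inl ⟨i, j, hij, rfl⟩)
  simp only [map_mul, map_inv] at h
  exact commutatorElement_eq_one_iff_mul_comm.mp h

instance : CommGroup ConeGroup :=
  { (inferInstance : Group ConeGroup) with
    mul_comm := mul_comm_of_closure_eq_top (closure_range_of coneRelators) (by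
      rintro _ ⟨i, rfl⟩ _ ⟨j, rfl⟩
      exact of_mul_of_comm i j) }

theorem of_sq_eq (i a b c : Fin 4)
    (h : .of i ^ (-2 : ℤ) * .of a * .of b * .of c ∈ coneRelators) :
    (of i : ConeGroup) ^ 2 = of a * of b * of c := by
  have h := one_of_mem h
  simp only [map_mul, map_zpow, mul_assoc] at h
  exact (sq_eq_of_zpow_neg_two_mul_eq_one h).trans (mul_assoc _ _ _).symm

theorem of_pow_three_eq_prod (i : Fin 4) : (of i : ConeGroup) ^ 3 = ∏ j, of j := by
  rw [Fin.prod_univ_four, pow_succ']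
  match i with
  | 0 => rw [of_sq_eq 0 1 2 3 (by simp [coneRelators])]; ac_rfl
  | 1 => rw [of_sq_eq 1 0 2 3 (by simp [coneRelators])]; ac_rfl
  | 2 => rw [of_sq_eq 2 0 1 3 (by simp [coneRelators])]; ac_rfl
  | 3 => rw [of_sq_eq 3 0 1 2 (by simp [coneRelators])]; ac_rfl

theorem prod_of_eq_one : ∏ j, (of j : ConeGroup) = 1 :=
  prod_eq_one_of_pow_three_eq_prod of_pow_three_eq_prod

theorem of_pow_three (i : Fin 4) : (of i : ConeGroup) ^ 3 = 1 :=
  (of_pow_three_eq_prod i).trans prod_of_eq_one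

def generatorImage : Fin 4 → Multiplicative (ZMod 3 × ZMod 3 × ZMod 3) :=
  ![.ofAdd (-1, -1, -1), .ofAdd (1, 0, 0), .ofAdd (0, 1, 0), .ofAdd (0, 0, 1)]

theorem lift_generatorImage_eq_one : ∀ r ∈ coneRelators, FreeGroup.lift generatorImage r = 1 := by
  rintro r (⟨i, j, -, rfl⟩ | hr)
  · simp only [map_mul, map_inv]
    exact commutatorElement_eq_one_iff_mul_comm.mpr (mul_comm _ _)
  · simp only [Set.mem_insert_iff, Set.mem_singleton_iff] at hr
    rcases hr with rfl | rfl | rfl | rfl <;>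
      simp only [map_mul, map_zpow, FreeGroup.lift_apply_of] <;> decide

def toZMod3 : ConeGroup →* Multiplicative (ZMod 3 × ZMod 3 × ZMod 3) :=
  toGroup lift_generatorImage_eq_one

def ofZMod3 : Multiplicative (ZMod 3 × ZMod 3 × ZMod 3) →* ConeGroup where
  toFun t := of 1 ^ t.toAdd.1.val * of 2 ^ t.toAdd.2.1.val * of 3 ^ t.toAdd.2.2.val
  map_one' := by simp
  map_mul' s t := by
    simp only [toAdd_mul, Prod.fst_add, Prod.snd_add, pow_zmod_val_add (of_pow_three _)]
    ac_rfl

theorem of_one_sq_mul_of_two_sq_mul_of_three_sq :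
    (of 1 : ConeGroup) ^ 2 * of 2 ^ 2 * of 3 ^ 2 = of 0 :=
  calc (of 1 : ConeGroup) ^ 2 * of 2 ^ 2 * of 3 ^ 2
      = (∏ j, of j) * (of 1 ^ 2 * of 2 ^ 2 * of 3 ^ 2) := by rw [prod_of_eq_one, one_mul]
    _ = of 0 * of 1 ^ 3 * of 2 ^ 3 * of 3 ^ 3 := by
      simp only [Fin.prod_univ_four, pow_succ, pow_zero, one_mul]; ac_rfl
    _ = of 0 := by simp only [of_pow_three, mul_one]

theorem ofZMod3_comp_toZMod3 : ofZMod3.comp toZMod3 = .id _ := by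
  refine PresentedGroup.ext fun i => ?_
  rw [MonoidHom.comp_apply, MonoidHom.id_apply, toZMod3, toGroup.of]
  match i with
  | 0 => exact of_one_sq_mul_of_two_sq_mul_of_three_sq -- `(-1 : ZMod 3).val` is `2`
  | 1 | 2 | 3 => simp [ofZMod3, generatorImage, ZMod.val_one_eq_one_mod]

theorem toZMod3_comp_ofZMod3 : toZMod3.comp ofZMod3 = .id _ := by
  refine MonoidHom.ext fun t => ?_
  simp only [MonoidHom.comp_apply, MonoidHom.id_apply, ofZMod3, toZMod3, MonoidHom.coe_mk,
    OneHom.coe_mk, map_mul, map_pow, toGroup.of]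
  revert t
  decide

def mulEquivZMod3 : ConeGroup ≃* Multiplicative (ZMod 3 × ZMod 3 × ZMod 3) :=
  toZMod3.toMulEquiv ofZMod3 ofZMod3_comp_toZMod3 toZMod3_comp_ofZMod3

end ConeGroup

/-- The presented group
`⟨γ₁, γ₂, γ₃, γ₄ ∣ [γᵢ, γⱼ] (i < j), γ₁⁻²γ₂γ₃γ₄, γ₂⁻²γ₁γ₃γ₄, γ₃⁻²γ₁γ₂γ₄, γ₄⁻²γ₁γ₂γ₃⟩`
is isomorphic to `(ℤ/3ℤ)³`. -/
theorem stmt_9 :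
    let γ : Fin 4 → FreeGroup (Fin 4) := FreeGroup.of
    let rels : Set (FreeGroup (Fin 4)) :=
      {w | ∃ i j : Fin 4, i < j ∧ w = γ i * γ j * (γ i)⁻¹ * (γ j)⁻¹} ∪
        {γ 0 ^ (-2 : ℤ) * γ 1 * γ 2 * γ 3,
          γ 1 ^ (-2 : ℤ) * γ 0 * γ 2 * γ 3,
          γ 2 ^ (-2 : ℤ) * γ 0 * γ 1 * γ 3,
          γ 3 ^ (-2 : ℤ) * γ 0 * γ 1 * γ 2}
    Nonempty (PresentedGroup rels ≃* Multiplicative (ZMod 3 × ZMod 3 × ZMod 3)) :=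
  ⟨ConeGroup.mulEquivZMod3⟩
end
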